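/- arXiv:2208.00762 — 5 statements merged into one kernel-verified Lean document; each statement's English description precedes it below -/
import Mathlib

section
/- Let L be a Lebesgue lattice over a set Z (a Riesz space of real-valued functions on Z closed under dominated pointwise limits). If f and g are elements of L, and U(g) = {z ∈ Z : g(z) ≠ 0}, then the function f·1_{U(g)} (which equals f on U(g) and 0 elsewhere) also belongs to L. -/
open Filter Topology

/-- `Pdom M`: dominated pointwise limits of sequences in `M`
(sequence `f₀, f₁, …` with `|fₙ| ≤ f₀` for `n ≥ 1`, converging pointwise). -/
def Pdom {Z : Type*} (M : Set (Z → ℝ)) : Set (Z → ℝ) :=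
  { f | ∃ F : ℕ → Z → ℝ, (∀ n, F n ∈ M) ∧ (∀ n, |F (n + 1)| ≤ F 0) ∧
      ∀ z, Tendsto (fun n => F n z) atTop (𝓝 (f z)) }

/-- `U` is a vector subspace of the functions `Z → ℝ`. -/
def IsSubspace {Z : Type*} (U : Set (Z → ℝ)) : Prop :=
  (0 : Z → ℝ) ∈ U ∧ (∀ f g, f ∈ U → g ∈ U → f + g ∈ U) ∧
    ∀ (c : ℝ) (f), f ∈ U → c • f ∈ U

/-- A Riesz space of functions: a subspace closed under pointwise absolute value. -/
def IsRiesz {Z : Type*} (R : Set (Z → ℝ)) : Prop :=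
  IsSubspace R ∧ ∀ f, f ∈ R → |f| ∈ R

/-- A Lebesgue lattice: a Riesz space closed under dominated pointwise limits. -/
def IsLebesgue {Z : Type*} (L : Set (Z → ℝ)) : Prop :=
  IsRiesz L ∧ Pdom L ⊆ L

/-- smallest Riesz space containing `M`. -/
def RGen {Z : Type*} (M : Set (Z → ℝ)) : Set (Z → ℝ) :=
  ⋂₀ { R | IsRiesz R ∧ M ⊆ R }

/-- smallest Lebesgue lattice containing `M`. -/
def LGen {Z : Type*} (M : Set (Z → ℝ)) : Set (Z → ℝ) :=
  ⋂₀ { L | IsLebesgue L ∧ M ⊆ L }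

/-- Daniell integral on `R`: additive, homogeneous, monotone, continuous under
decreasing convergence to `0`. -/
def IsDaniell {Z : Type*} (R : Set (Z → ℝ)) (I : (Z → ℝ) → ℝ) : Prop :=
  IsRiesz R ∧
  (∀ f g, f ∈ R → g ∈ R → I (f + g) = I f + I g) ∧
  (∀ (c : ℝ) (f), f ∈ R → I (c • f) = c * I f) ∧
  (∀ f, f ∈ R → I f ≤ I |f|) ∧
  ∀ F : ℕ → Z → ℝ, (∀ n, F n ∈ R) → (∀ n, 0 ≤ F (n + 1)) →
    (∀ n, F (n + 1) ≤ F n) →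
    (∀ z, Tendsto (fun n => F n z) atTop (𝓝 0)) →
    Tendsto (fun n => I (F n)) atTop (𝓝 0)

/-- elementary tensor `(g ⊗ h)(x, y) = g x * h y`. -/
def tensor {X Y : Type*} (g : X → ℝ) (h : Y → ℝ) : X × Y → ℝ :=
  fun p => g p.1 * h p.2

/-- tensor product `V ⊗ W`: finite sums of elementary tensors. -/
def TensorSet {X Y : Type*} (V : Set (X → ℝ)) (W : Set (Y → ℝ)) :
    Set (X × Y → ℝ) :=
  { f | ∃ (k : ℕ) (g : Fin k → X → ℝ) (h : Fin k → Y → ℝ),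
      (∀ i, g i ∈ V) ∧ (∀ i, h i ∈ W) ∧ f = ∑ i, tensor (g i) (h i) }

/-- `iterP U m`: `U₁ = U`, `U_{m+1} = P(U_m)` (0-indexed). -/
def iterP {Z : Type*} (U : Set (Z → ℝ)) : ℕ → Set (Z → ℝ)
  | 0 => U
  | n + 1 => Pdom (iterP U n)

/-
The truncations `(f ⊓ n|g|) ⊔ (-n|g|)` lie in `L`, are dominated by `|f| ∈ L`, and converge
pointwise to `f` where `g ≠ 0` (once `n|g z| ≥ |f z|`) and are identically `0` where `g = 0`;
closure of `L` under dominated limits gives the claim.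
-/

namespace IsRiesz

variable {Z : Type*} {R : Set (Z → ℝ)}

theorem add_mem (hR : IsRiesz R) {a b : Z → ℝ} (ha : a ∈ R) (hb : b ∈ R) : a + b ∈ R :=
  hR.1.2.1 a b ha hb

theorem smul_mem (hR : IsRiesz R) (c : ℝ) {a : Z → ℝ} (ha : a ∈ R) : c • a ∈ R :=
  hR.1.2.2 c a ha

theorem abs_mem (hR : IsRiesz R) {a : Z → ℝ} (ha : a ∈ R) : |a| ∈ R :=
  hR.2 a ha

theorem neg_mem (hR : IsRiesz R) {a : Z → ℝ} (ha : a ∈ R) : -a ∈ R := by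
  simpa using hR.smul_mem (-1) ha

theorem sub_mem (hR : IsRiesz R) {a b : Z → ℝ} (ha : a ∈ R) (hb : b ∈ R) : a - b ∈ R := by
  simpa [sub_eq_add_neg] using hR.add_mem ha (hR.neg_mem hb)

theorem sup_mem (hR : IsRiesz R) {a b : Z → ℝ} (ha : a ∈ R) (hb : b ∈ R) : a ⊔ b ∈ R := by
  rw [sup_eq_half_smul_add_add_abs_sub' ℝ]
  exact hR.smul_mem _ (hR.add_mem (hR.add_mem ha hb) (hR.abs_mem (hR.sub_mem hb ha)))

theorem inf_mem (hR : IsRiesz R) {a b : Z → ℝ} (ha : a ∈ R) (hb : b ∈ R) : a ⊓ b ∈ R := by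
  rw [inf_eq_half_smul_add_sub_abs_sub' ℝ]
  exact hR.smul_mem _ (hR.sub_mem (hR.add_mem ha hb) (hR.abs_mem (hR.sub_mem hb ha)))

end IsRiesz

theorem mem_Pdom_of_abs_le {Z : Type*} {M : Set (Z → ℝ)} {G : ℕ → Z → ℝ} {h f : Z → ℝ}
    (hh : h ∈ M) (hG : ∀ n, G n ∈ M) (hdom : ∀ n, |G n| ≤ h)
    (hlim : ∀ z, Tendsto (fun n => G n z) atTop (𝓝 (f z))) : f ∈ Pdom M :=
  ⟨fun n => Nat.casesOn n h G, fun n => Nat.casesOn n hh hG, hdom,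
    fun z => (tendsto_add_atTop_iff_nat 1).1 (hlim z)⟩

theorem abs_max_min_neg_le (x : ℝ) {c : ℝ} (hc : 0 ≤ c) : |max (min x c) (-c)| ≤ |x| := by
  rw [abs_le]
  constructor <;> cases abs_cases x <;> cases min_cases x c <;> cases max_cases (min x c) (-c) <;>
    linarith

theorem max_min_neg_of_abs_le {x c : ℝ} (h : |x| ≤ c) : max (min x c) (-c) = x := by
  rw [abs_le] at h
  rw [min_eq_left h.2, max_eq_left h.1]

theorem tendsto_max_min_natCast_mul_abs (x y : ℝ) :
    Tendsto (fun n : ℕ => max (min x (n * |y|)) (-(n * |y|))) atTop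
      (𝓝 (if y ≠ 0 then x else 0)) := by
  by_cases hy : y = 0
  · simp [hy]
  · have hlarge : ∀ᶠ n : ℕ in atTop, |x| ≤ n * |y| :=
      (tendsto_natCast_atTop_atTop.atTop_mul_const (abs_pos.2 hy)).eventually_ge_atTop |x|
    rw [if_pos hy]
    exact tendsto_const_nhds.congr' (hlarge.mono fun n hn => (max_min_neg_of_abs_le hn).symm)

theorem stmt0 {Z : Type*} (L : Set (Z → ℝ)) (hL : IsLebesgue L)
    (f g : Z → ℝ) (hf : f ∈ L) (hg : g ∈ L) :
    (fun z => if g z ≠ 0 then f z else 0) ∈ L := by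
  obtain ⟨hR, hPdom⟩ := hL
  have hbound : ∀ n : ℕ, (n : ℝ) • |g| ∈ L := fun n => hR.smul_mem _ (hR.abs_mem hg)
  apply hPdom
  refine mem_Pdom_of_abs_le (G := fun n => f ⊓ (n : ℝ) • |g| ⊔ -((n : ℝ) • |g|)) (hR.abs_mem hf)
    (fun n => hR.sup_mem (hR.inf_mem hf (hbound n)) (hR.neg_mem (hbound n)))
    (fun n z => abs_max_min_neg_le (f z) (mul_nonneg n.cast_nonneg (abs_nonneg (g z))))
    (fun z => tendsto_max_min_natCast_mul_abs (f z) (g z))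
end

section
/- Let R be a Riesz space of real-valued functions over Z, and let M ⊆ F(Z) be a set satisfying R ⊆ M and P(M) ⊆ M, where P(M) is the set of all pointwise limits of sequences in M dominated in absolute value by the first element of the sequence. Then L(R) ⊆ M, where L(R) is the smallest Lebesgue lattice containing R. -/
open Filter Topology

/-! The smallest `Pdom`-closed set containing `R` is already a Lebesgue lattice: each Riesz-space
closure property passes to dominated pointwise limits, so it propagates from `R` by induction
over that closure (for sums in two rounds: first with one summand in `R`, then in the closure).
Hence `LGen R` lies inside it, and it lies inside every `Pdom`-closed `M ⊇ R`. -/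

section

variable {Z : Type*}

lemma pdom_mono {A B : Set (Z → ℝ)} (h : A ⊆ B) : Pdom A ⊆ Pdom B :=
  fun _ ⟨F, hF, hdom, hlim⟩ => ⟨F, fun n => h (hF n), hdom, hlim⟩

/-- The dominating function may be chosen separately from the sequence, since `Pdom` only asks
for domination of the tail. -/
lemma mem_pdom_of_dominated {B : Set (Z → ℝ)} {G : ℕ → Z → ℝ} {g₀ f : Z → ℝ}
    (hG : ∀ n, G n ∈ B) (hg₀ : g₀ ∈ B) (hdom : ∀ n, |G n| ≤ g₀)
    (hlim : ∀ z, Tendsto (fun n => G n z) atTop (𝓝 (f z))) : f ∈ Pdom B := by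
  refine ⟨fun n => Nat.casesOn n g₀ G, fun n => n.casesOn hg₀ hG, hdom, fun z => ?_⟩
  exact (tendsto_add_atTop_iff_nat 1).1 (hlim z)

lemma abs_mem_pdom {A B : Set (Z → ℝ)} {f : Z → ℝ} (hf : f ∈ Pdom A) (hAB : A ⊆ B)
    (hA : ∀ g ∈ A, |g| ∈ B) : |f| ∈ Pdom B := by
  obtain ⟨F, hF, hdom, hlim⟩ := hf
  refine mem_pdom_of_dominated (G := fun n => |F (n + 1)|) (fun n => hA _ (hF _)) (hAB (hF 0))
    (fun n => by simpa only [abs_abs] using hdom n) fun z => ?_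
  exact ((tendsto_add_atTop_iff_nat 1).2 (hlim z)).abs

lemma smul_mem_pdom {A B : Set (Z → ℝ)} {f : Z → ℝ} (c : ℝ) (hf : f ∈ Pdom A)
    (hA : ∀ g ∈ A, ∀ c : ℝ, c • g ∈ B) : c • f ∈ Pdom B := by
  obtain ⟨F, hF, hdom, hlim⟩ := hf
  refine mem_pdom_of_dominated (G := fun n => c • F (n + 1)) (fun n => hA _ (hF _) c)
    (hA _ (hF 0) |c|) (fun n z => ?_) fun z => ?_
  · simpa only [Pi.abs_apply, Pi.smul_apply, smul_eq_mul, abs_mul] using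
      mul_le_mul_of_nonneg_left (hdom n z) (abs_nonneg c)
  · exact ((tendsto_add_atTop_iff_nat 1).2 (hlim z)).const_mul c

lemma add_mem_pdom {A B : Set (Z → ℝ)} {f g : Z → ℝ} (hf : f ∈ Pdom A)
    (hg : ∀ h ∈ A, h + g ∈ B) (hg_abs : ∀ h ∈ A, h + |g| ∈ B) : f + g ∈ Pdom B := by
  obtain ⟨F, hF, hdom, hlim⟩ := hf
  refine mem_pdom_of_dominated (G := fun n => F (n + 1) + g) (fun n => hg _ (hF _))
    (hg_abs _ (hF 0)) (fun n z => ?_) fun z => ?_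
  · calc |F (n + 1) z + g z| ≤ |F (n + 1) z| + |g z| := abs_add_le _ _
      _ ≤ F 0 z + |g z| := add_le_add_left (hdom n z) _
  · exact ((tendsto_add_atTop_iff_nat 1).2 (hlim z)).add_const (g z)

def pdomClosure (R : Set (Z → ℝ)) : Set (Z → ℝ) :=
  ⋂₀ {N | R ⊆ N ∧ Pdom N ⊆ N}

section pdomClosure

variable {R : Set (Z → ℝ)}

lemma pdomClosure_subset {M : Set (Z → ℝ)} (hRM : R ⊆ M) (hPM : Pdom M ⊆ M) :
    pdomClosure R ⊆ M :=
  Set.sInter_subset_of_mem ⟨hRM, hPM⟩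

lemma subset_pdomClosure : R ⊆ pdomClosure R :=
  Set.subset_sInter fun _ hN => hN.1

lemma pdom_pdomClosure_subset : Pdom (pdomClosure R) ⊆ pdomClosure R :=
  Set.subset_sInter fun _ hN =>
    (pdom_mono (Set.sInter_subset_of_mem hN)).trans hN.2

lemma pdomClosure_induction {p : (Z → ℝ) → Prop} (base : ∀ f ∈ R, p f)
    (step : ∀ f ∈ Pdom {g | g ∈ pdomClosure R ∧ p g}, p f) :
    ∀ f ∈ pdomClosure R, p f := by
  have hP : Pdom {g | g ∈ pdomClosure R ∧ p g} ⊆ {g | g ∈ pdomClosure R ∧ p g} :=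
    fun f hf => ⟨pdom_pdomClosure_subset (pdom_mono (fun _ hg => hg.1) hf), step f hf⟩
  exact fun f hf => (pdomClosure_subset (M := {g | g ∈ pdomClosure R ∧ p g})
    (fun g hg => ⟨subset_pdomClosure hg, base g hg⟩) hP hf).2

lemma abs_mem_pdomClosure (hR : ∀ f ∈ R, |f| ∈ R) {f : Z → ℝ} (hf : f ∈ pdomClosure R) :
    |f| ∈ pdomClosure R := by
  refine pdomClosure_induction (p := fun f => |f| ∈ pdomClosure R)
    (fun g hg => subset_pdomClosure (hR g hg)) (fun g hg => ?_) f hf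
  exact pdom_pdomClosure_subset (abs_mem_pdom hg (fun _ h => h.1) fun _ h => h.2)

lemma smul_mem_pdomClosure (hR : ∀ (c : ℝ) (f), f ∈ R → c • f ∈ R) (c : ℝ) {f : Z → ℝ}
    (hf : f ∈ pdomClosure R) : c • f ∈ pdomClosure R := by
  refine pdomClosure_induction (p := fun f => ∀ c : ℝ, c • f ∈ pdomClosure R)
    (fun g hg c => subset_pdomClosure (hR c g hg)) (fun g hg c => ?_) f hf c
  exact pdom_pdomClosure_subset (smul_mem_pdom c hg fun _ h => h.2)

lemma add_mem_pdomClosure_of_mem (hadd : ∀ f g, f ∈ R → g ∈ R → f + g ∈ R)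
    (habs : ∀ f ∈ R, |f| ∈ R) {f g : Z → ℝ} (hf : f ∈ pdomClosure R) (hg : g ∈ R) :
    f + g ∈ pdomClosure R := by
  refine pdomClosure_induction (p := fun f => ∀ g ∈ R, f + g ∈ pdomClosure R)
    (fun f hf g hg => subset_pdomClosure (hadd f g hf hg)) (fun f hf g hg => ?_) f hf g hg
  exact pdom_pdomClosure_subset
    (add_mem_pdom hf (fun _ h => h.2 g hg) fun _ h => h.2 _ (habs g hg))

lemma add_mem_pdomClosure (hadd : ∀ f g, f ∈ R → g ∈ R → f + g ∈ R)
    (habs : ∀ f ∈ R, |f| ∈ R) {f g : Z → ℝ} (hf : f ∈ pdomClosure R)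
    (hg : g ∈ pdomClosure R) : f + g ∈ pdomClosure R := by
  refine pdomClosure_induction (p := fun f => ∀ g ∈ pdomClosure R, f + g ∈ pdomClosure R)
    (fun f hf g hg => add_comm g f ▸ add_mem_pdomClosure_of_mem hadd habs hg hf)
    (fun f hf g hg => ?_) f hf g hg
  exact pdom_pdomClosure_subset
    (add_mem_pdom hf (fun _ h => h.2 g hg) fun _ h => h.2 _ (abs_mem_pdomClosure habs hg))

lemma isLebesgue_pdomClosure (hR : IsRiesz R) : IsLebesgue (pdomClosure R) :=
  ⟨⟨⟨subset_pdomClosure hR.1.1, fun _ _ => add_mem_pdomClosure hR.1.2.1 hR.2,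
    fun c _ => smul_mem_pdomClosure hR.1.2.2 c⟩, fun _ => abs_mem_pdomClosure hR.2⟩,
    pdom_pdomClosure_subset⟩

end pdomClosure

lemma LGen_subset {R L : Set (Z → ℝ)} (hL : IsLebesgue L) (hRL : R ⊆ L) : LGen R ⊆ L :=
  Set.sInter_subset_of_mem ⟨hL, hRL⟩

end

theorem stmt1 {Z : Type*} (R M : Set (Z → ℝ)) (hR : IsRiesz R)
    (hRM : R ⊆ M) (hPM : Pdom M ⊆ M) : LGen R ⊆ M :=
  (LGen_subset (isLebesgue_pdomClosure hR) subset_pdomClosure).trans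
    (pdomClosure_subset hRM hPM)
end

section
/- Let U ⊆ F(Z) be a vector space of real-valued functions with |U| ⊆ P(U). Then |P(U)| ⊆ P(P(U)); that is, for every f ∈ P(U), the absolute value |f| belongs to P(P(U)). -/
open Filter Topology

theorem abs_mem_Pdom_of_forall_abs_mem {Z : Type*} {M N : Set (Z → ℝ)}
    (h : ∀ g ∈ M, |g| ∈ N) {f : Z → ℝ} (hf : f ∈ Pdom M) : |f| ∈ Pdom N := by
  obtain ⟨F, hFM, hdom, hlim⟩ := hf
  refine ⟨fun n => |F n|, fun n => h _ (hFM n), fun n => ?_, fun z => ?_⟩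
  · rw [abs_abs]
    exact (hdom n).trans (le_abs_self _)
  · exact (continuous_abs.tendsto _).comp (hlim z)

theorem stmt4_general {Z : Type*} (U : Set (Z → ℝ))
    (habs : ∀ f ∈ U, |f| ∈ Pdom U) :
    ∀ f ∈ Pdom U, |f| ∈ Pdom (Pdom U) :=
  fun _ => abs_mem_Pdom_of_forall_abs_mem habs

theorem stmt4 {Z : Type*} (U : Set (Z → ℝ)) (hU : IsSubspace U)
    (habs : ∀ f ∈ U, |f| ∈ Pdom U) :
    ∀ f ∈ Pdom U, |f| ∈ Pdom (Pdom U) :=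
  stmt4_general U habs
end

section
/- Let V and W be Lebesgue lattices over X and Y, and U = V ⊗ W their tensor product. Then |U| ⊆ P(U): for every f ∈ U, the function |f| is the pointwise limit of a sequence in U dominated by a fixed element of U. -/
open Filter Topology

section helpers
variable {Z : Type*} {L : Set (Z → ℝ)}

lemma riesz_smul (hL : IsRiesz L) (c : ℝ) {f} (hf : f ∈ L) : c • f ∈ L :=
  hL.1.2.2 c f hf

lemma riesz_add (hL : IsRiesz L) {f g} (hf : f ∈ L) (hg : g ∈ L) : f + g ∈ L :=
  hL.1.2.1 f g hf hg

lemma riesz_neg (hL : IsRiesz L) {f} (hf : f ∈ L) : -f ∈ L := by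
  simpa [neg_one_smul] using riesz_smul hL (-1) hf

lemma riesz_sub (hL : IsRiesz L) {f g} (hf : f ∈ L) (hg : g ∈ L) : f - g ∈ L := by
  simpa [sub_eq_add_neg] using riesz_add hL hf (riesz_neg hL hg)

lemma riesz_max (hL : IsRiesz L) {f g} (hf : f ∈ L) (hg : g ∈ L) :
    (fun z => max (f z) (g z)) ∈ L := by
  have h0 : ((1:ℝ)/2) • (f + g + |f - g|) ∈ L :=
    riesz_smul hL _ (riesz_add hL (riesz_add hL hf hg) (hL.2 _ (riesz_sub hL hf hg)))
  convert h0 using 1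
  funext z
  simp only [Pi.smul_apply, Pi.add_apply, Pi.abs_apply, Pi.sub_apply, smul_eq_mul]
  rcases le_total (f z) (g z) with h | h
  · rw [max_eq_right h, abs_of_nonpos (by linarith)]; ring
  · rw [max_eq_left h, abs_of_nonneg (by linarith)]; ring

lemma riesz_min (hL : IsRiesz L) {f g} (hf : f ∈ L) (hg : g ∈ L) :
    (fun z => min (f z) (g z)) ∈ L := by
  have h0 : ((1:ℝ)/2) • (f + g - |f - g|) ∈ L :=
    riesz_smul hL _ (riesz_sub hL (riesz_add hL hf hg) (hL.2 _ (riesz_sub hL hf hg)))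
  convert h0 using 1
  funext z
  simp only [Pi.smul_apply, Pi.add_apply, Pi.abs_apply, Pi.sub_apply, smul_eq_mul]
  rcases le_total (f z) (g z) with h | h
  · rw [min_eq_left h, abs_of_nonpos (by linarith)]; ring
  · rw [min_eq_right h, abs_of_nonneg (by linarith)]; ring

lemma riesz_pos (hL : IsRiesz L) {f} (hf : f ∈ L) : (fun z => max (f z) 0) ∈ L :=
  riesz_max hL hf hL.1.1

lemma leb_restrict_nonneg (hL : IsLebesgue L) {v φ : Z → ℝ} (hv : v ∈ L)
    (hv0 : ∀ z, 0 ≤ v z) (hφ : φ ∈ L) :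
    (fun z => if 0 < φ z then v z else 0) ∈ L := by
  classical
  set F : ℕ → Z → ℝ := fun n =>
    Nat.casesOn n v (fun m => fun z => min (((m : ℝ) + 1) * max (φ z) 0) (v z)) with hF
  apply hL.2
  refine ⟨F, ?_, ?_, ?_⟩
  · rintro (_ | m)
    · exact hv
    · have : (fun z => min ((((m:ℝ)+1) • fun w => max (φ w) 0) z) (v z)) ∈ L :=
        riesz_min hL.1 (riesz_smul hL.1 _ (riesz_pos hL.1 hφ)) hv
      simpa using this
  · intro n z
    simp only [Pi.abs_apply, hF]
    have h1 : 0 ≤ min (((n : ℝ) + 1) * max (φ z) 0) (v z) :=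
      le_min (by positivity) (hv0 z)
    rw [abs_of_nonneg h1]
    exact min_le_right _ _
  · intro z
    by_cases hz : 0 < φ z
    · simp only [hz, if_true]
      apply Tendsto.congr' _ tendsto_const_nhds
      filter_upwards [eventually_ge_atTop (⌈v z / φ z⌉₊ + 1)] with n hn
      obtain ⟨m, rfl⟩ : ∃ m, n = m + 1 := ⟨n - 1, by omega⟩
      have h2 : v z ≤ ((m : ℝ) + 1) * φ z := by
        have h3 : (⌈v z / φ z⌉₊ : ℝ) ≤ (m : ℝ) + 1 := by
          exact_mod_cast (by omega : ⌈v z / φ z⌉₊ ≤ m + 1)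
        have h4 : v z / φ z ≤ (m : ℝ) + 1 := (Nat.le_ceil _).trans h3
        calc v z = (v z / φ z) * φ z := by field_simp
        _ ≤ ((m : ℝ) + 1) * φ z := by nlinarith
      simp only [hF, max_eq_left hz.le]
      exact (min_eq_right h2).symm
    · simp only [hz, if_false]
      apply Tendsto.congr' _ tendsto_const_nhds
      filter_upwards [eventually_ge_atTop 1] with n hn
      obtain ⟨m, rfl⟩ : ∃ m, n = m + 1 := ⟨n - 1, by omega⟩
      simp only [hF]
      rw [max_eq_right (not_lt.mp hz), mul_zero]
      exact (min_eq_left (hv0 z)).symm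

end helpers
section helpers2
variable {Z : Type*} {L : Set (Z → ℝ)}

lemma leb_restrict (hL : IsLebesgue L) {v φ : Z → ℝ} (hv : v ∈ L) (hφ : φ ∈ L) :
    (fun z => if 0 < φ z then v z else 0) ∈ L := by
  classical
  have hp : (fun z => if 0 < φ z then max (v z) 0 else 0) ∈ L :=
    leb_restrict_nonneg hL (riesz_pos hL.1 hv) (fun z => le_max_right _ _) hφ
  have hn : (fun z => if 0 < φ z then max (-v z) 0 else 0) ∈ L :=
    leb_restrict_nonneg hL (riesz_pos hL.1 (riesz_neg hL.1 hv))
      (fun z => le_max_right _ _) hφ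
  have := riesz_sub hL.1 hp hn
  convert this using 1
  funext z
  simp only [Pi.sub_apply]
  split_ifs with h
  · rcases le_total (v z) 0 with h1 | h1
    · rw [max_eq_right h1, max_eq_left (by linarith)]; ring
    · rw [max_eq_left h1, max_eq_right (by linarith)]; ring
  · ring

lemma leb_sgnMul (hL : IsLebesgue L) {v φ : Z → ℝ} (hv : v ∈ L) (hφ : φ ∈ L) :
    (fun z => v z * (if 0 < φ z then 1 else -1)) ∈ L := by
  classical
  have hr : (fun z => if 0 < φ z then v z else 0) ∈ L := leb_restrict hL hv hφ
  have := riesz_sub hL.1 (riesz_smul hL.1 2 hr) hv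
  convert this using 1
  funext z
  simp only [Pi.sub_apply, Pi.smul_apply, smul_eq_mul]
  split_ifs <;> ring

lemma leb_mul_boolInd (hL : IsLebesgue L) {ι : Type*} [DecidableEq ι] (t : Finset ι)
    (φ : ι → Z → ℝ) (b : ι → Bool) (hφ : ∀ j ∈ t, φ j ∈ L) :
    ∀ v : Z → ℝ, v ∈ L → (∀ z, 0 ≤ v z) →
    (fun z => v z * ∏ j ∈ t, (if (decide (0 < φ j z)) = b j then (1:ℝ) else 0)) ∈ L := by
  classical
  induction t using Finset.induction with
  | empty => intro v hv _; simpa using hv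
  | @insert a t ha ih =>
    intro v hv hv0
    have hφa : φ a ∈ L := hφ a (Finset.mem_insert_self _ _)
    set v' : Z → ℝ := fun z => v z * (if (decide (0 < φ a z)) = b a then (1:ℝ) else 0)
      with hv'
    have hv'0 : ∀ z, 0 ≤ v' z := by
      intro z; simp only [hv']; split_ifs <;> simp [hv0 z]
    have hv'L : v' ∈ L := by
      cases hb : b a with
      | true =>
        have := leb_restrict hL hv hφa
        convert this using 1
        funext z
        simp only [hv', hb, decide_eq_true_eq]
        split_ifs <;> simp
      | false =>
        have := riesz_sub hL.1 hv (leb_restrict hL hv hφa)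
        convert this using 1
        funext z
        simp only [hv', hb, Pi.sub_apply, decide_eq_false_iff_not]
        split_ifs <;> simp
    have := ih (fun j hj => hφ j (Finset.mem_insert_of_mem hj)) v' hv'L hv'0
    convert this using 1
    funext z
    rw [Finset.prod_insert ha]
    simp only [hv']
    ring

/-- finite linear combinations of members lie in a Riesz space -/
lemma riesz_sum {ι : Type*} (hL : IsRiesz L) (t : Finset ι) (f : ι → Z → ℝ)
    (hf : ∀ i ∈ t, f i ∈ L) : (fun z => ∑ i ∈ t, f i z) ∈ L := by
  classical
  induction t using Finset.induction with
  | empty => simpa using (show (fun _ => (0:ℝ)) ∈ L from hL.1.1)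
  | @insert a t ha ih =>
    have := riesz_add hL (hf a (Finset.mem_insert_self _ _))
      (ih fun i hi => hf i (Finset.mem_insert_of_mem hi))
    convert this using 1
    funext z
    simp [Finset.sum_insert ha]

lemma riesz_lincomb {ι : Type*} [Fintype ι] (hL : IsRiesz L) (c : ι → ℝ)
    (f : ι → Z → ℝ) (hf : ∀ i, f i ∈ L) : (fun z => ∑ i, c i * f i z) ∈ L := by
  have := riesz_sum hL Finset.univ (fun i => c i • f i)
    (fun i _ => riesz_smul hL (c i) (hf i))
  simpa using this

end helpers2
section tensorlemmas
variable {X Y : Type*} {V : Set (X → ℝ)} {W : Set (Y → ℝ)}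

lemma tensorSet_sum {ι : Type*} [Fintype ι] (g : ι → X → ℝ) (h : ι → Y → ℝ)
    (hg : ∀ i, g i ∈ V) (hh : ∀ i, h i ∈ W) :
    (∑ i, tensor (g i) (h i)) ∈ TensorSet V W := by
  classical
  let e := Fintype.equivFin ι
  exact ⟨Fintype.card ι, fun j => g (e.symm j), fun j => h (e.symm j),
    fun j => hg _, fun j => hh _,
    (Equiv.sum_comp e.symm (fun i => tensor (g i) (h i))).symm⟩

end tensorlemmas

section geometry
open scoped RealInnerProductSpace

variable {k : ℕ}

local notation "E" => EuclideanSpace ℝ (Fin k)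

lemma net_exists (k : ℕ) {δ : ℝ} (hδ : 0 < δ) :
    ∃ A : Finset (EuclideanSpace ℝ (Fin k)), (∀ a ∈ A, ‖a‖ = 1) ∧
      ∀ u : EuclideanSpace ℝ (Fin k), ‖u‖ = 1 → ∃ a ∈ A, dist u a < δ := by
  classical
  obtain ⟨t, hts, htf, htc⟩ :=
    (isCompact_sphere (0 : EuclideanSpace ℝ (Fin k)) 1).finite_cover_balls hδ
  refine ⟨htf.toFinset, ?_, ?_⟩
  · intro a ha
    rw [Set.Finite.mem_toFinset] at ha
    have := hts ha
    simpa [mem_sphere_zero_iff_norm] using this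
  · intro u hu
    have hu' : u ∈ Metric.sphere (0 : EuclideanSpace ℝ (Fin k)) 1 := by
      simpa [mem_sphere_zero_iff_norm] using hu
    obtain ⟨a, ha, hd⟩ := Set.mem_iUnion₂.mp (htc hu')
    exact ⟨a, Set.Finite.mem_toFinset _ |>.mpr ha, hd⟩

lemma same_pattern_close {δ : ℝ} (hδ : 0 < δ) (A : Finset (EuclideanSpace ℝ (Fin k)))
    (hAnet : ∀ u : EuclideanSpace ℝ (Fin k), ‖u‖ = 1 → ∃ a ∈ A, dist u a < δ)
    {u u' : EuclideanSpace ℝ (Fin k)} (hu : ‖u‖ = 1) (hu' : ‖u'‖ = 1)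
    (hpat : ∀ a ∈ A, (0 < ⟪a, u⟫ ↔ 0 < ⟪a, u'⟫)) : ‖u - u'‖ ≤ 2 * δ := by
  by_contra hlt
  push_neg at hlt
  have hne : u ≠ u' := by
    intro h; rw [h] at hlt; simp at hlt; linarith
  have hnorm : 0 < ‖u - u'‖ := by
    rw [norm_pos_iff]; exact sub_ne_zero.mpr hne
  set a₀ : EuclideanSpace ℝ (Fin k) := ‖u - u'‖⁻¹ • (u - u') with ha₀
  have ha₀n : ‖a₀‖ = 1 := by
    rw [ha₀, norm_smul, norm_inv, Real.norm_eq_abs, abs_of_pos hnorm,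
      inv_mul_cancel₀ hnorm.ne']
  obtain ⟨a, haA, had⟩ := hAnet a₀ ha₀n
  have hinner : ⟪u - u', u⟫ = ‖u - u'‖ ^ 2 / 2 := by
    have h1 : ‖u - u'‖ ^ 2 = ‖u‖ ^ 2 - 2 * ⟪u, u'⟫ + ‖u'‖ ^ 2 := norm_sub_sq_real u u'
    rw [hu, hu'] at h1
    rw [inner_sub_left]
    rw [real_inner_self_eq_norm_sq, hu]
    linarith [real_inner_comm u u']
  have hinner' : ⟪u - u', u'⟫ = -(‖u - u'‖ ^ 2 / 2) := by
    have h1 : ‖u - u'‖ ^ 2 = ‖u‖ ^ 2 - 2 * ⟪u, u'⟫ + ‖u'‖ ^ 2 := norm_sub_sq_real u u'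
    rw [hu, hu'] at h1
    rw [inner_sub_left]
    rw [real_inner_self_eq_norm_sq, hu']
    linarith [real_inner_comm u u']
  have h0u : ⟪a₀, u⟫ = ‖u - u'‖ / 2 := by
    rw [ha₀, real_inner_smul_left, hinner]
    field_simp
  have h0u' : ⟪a₀, u'⟫ = -(‖u - u'‖ / 2) := by
    rw [ha₀, real_inner_smul_left, hinner']
    field_simp
  have hest : ∀ w : EuclideanSpace ℝ (Fin k), ‖w‖ = 1 → |⟪a - a₀, w⟫| ≤ ‖a - a₀‖ := by
    intro w hw
    calc |⟪a - a₀, w⟫| ≤ ‖a - a₀‖ * ‖w‖ := abs_real_inner_le_norm _ _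
    _ = ‖a - a₀‖ := by rw [hw, mul_one]
  have hdist : ‖a - a₀‖ < δ := by
    rw [← dist_eq_norm, dist_comm]; exact had
  have hau : 0 < ⟪a, u⟫ := by
    have h1 : ⟪a, u⟫ = ⟪a₀, u⟫ + ⟪a - a₀, u⟫ := by
      rw [inner_sub_left]; ring
    have h2 := (abs_le.mp (hest u hu)).1
    rw [h1, h0u]
    linarith
  have hau' : ¬ 0 < ⟪a, u'⟫ := by
    have h1 : ⟪a, u'⟫ = ⟪a₀, u'⟫ + ⟪a - a₀, u'⟫ := by
      rw [inner_sub_left]; ring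
    have h2 := (abs_le.mp (hest u' hu')).2
    rw [h1, h0u']
    push_neg
    linarith
  exact hau' ((hpat a haA).mp hau)

end geometry
section approx
open scoped RealInnerProductSpace

/-- view a plain vector as a Euclidean vector -/
def euclid {k : ℕ} (u : Fin k → ℝ) : EuclideanSpace ℝ (Fin k) := WithLp.toLp 2 u

lemma approx_step {X Y : Type*} {V : Set (X → ℝ)} {W : Set (Y → ℝ)}
    (hV : IsLebesgue V) (hW : IsLebesgue W) (k : ℕ)
    (g : Fin k → X → ℝ) (h : Fin k → Y → ℝ)
    (hg : ∀ i, g i ∈ V) (hh : ∀ i, h i ∈ W) {δ : ℝ} (hδ : 0 < δ) :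
    ∃ T ∈ TensorSet V W,
      (∀ x y, |T (x, y)| ≤ |∑ i, g i x * h i y|) ∧
      (∀ x y, |(|∑ i, g i x * h i y|) - T (x, y)| ≤
        4 * δ * ‖euclid (fun i => g i x)‖ * ‖euclid (fun i => h i y)‖) := by
  classical
  obtain ⟨A, hA1, hAnet⟩ := net_exists k hδ
  let uvec : X → EuclideanSpace ℝ (Fin k) := fun x => euclid (fun i => g i x)
  let vvec : Y → EuclideanSpace ℝ (Fin k) := fun y => euclid (fun i => h i y)
  let pat : EuclideanSpace ℝ (Fin k) → ({a // a ∈ A} → Bool) := fun u a =>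
    decide (0 < ⟪(a : EuclideanSpace ℝ (Fin k)), u⟫)
  let rep : ({a // a ∈ A} → Bool) → EuclideanSpace ℝ (Fin k) := fun s =>
    if hs : ∃ r : EuclideanSpace ℝ (Fin k), ‖r‖ = 1 ∧ pat r = s then hs.choose else 0
  let ind : ({a // a ∈ A} → Bool) → X → ℝ := fun s x => if pat (uvec x) = s then 1 else 0
  let sgn : ({a // a ∈ A} → Bool) → Y → ℝ := fun s y => if 0 < ⟪rep s, vvec y⟫ then 1 else -1
  let T : X × Y → ℝ := ∑ p : ({a // a ∈ A} → Bool) × Fin k,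
    tensor (fun x => g p.2 x * ind p.1 x) (fun y => h p.2 y * sgn p.1 y)
  -- inner products are linear combinations
  have hφa : ∀ a : {a // a ∈ A}, (fun x => ⟪(a : EuclideanSpace ℝ (Fin k)), uvec x⟫) ∈ V := by
    intro a
    have h1 : (fun x => ∑ i, (a : EuclideanSpace ℝ (Fin k)) i * g i x) ∈ V :=
      riesz_lincomb hV.1 _ g hg
    have e1 : (fun x => ⟪(a : EuclideanSpace ℝ (Fin k)), uvec x⟫)
        = fun x => ∑ i, (a : EuclideanSpace ℝ (Fin k)) i * g i x := by
      funext x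
      simp [PiLp.inner_apply, RCLike.inner_apply, uvec, euclid, mul_comm]
    rw [e1]; exact h1
  have hψ : ∀ s, (fun y => ⟪rep s, vvec y⟫) ∈ W := by
    intro s
    have h1 : (fun y => ∑ i, rep s i * h i y) ∈ W := riesz_lincomb hW.1 _ h hh
    have e1 : (fun y => ⟪rep s, vvec y⟫) = fun y => ∑ i, rep s i * h i y := by
      funext y
      simp [PiLp.inner_apply, RCLike.inner_apply, vvec, euclid, mul_comm]
    rw [e1]; exact h1
  -- the X-factors belong to V
  have hindmem : ∀ s i, (fun x => g i x * ind s x) ∈ V := by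
    intro s i
    have hprod : ∀ x, ind s x =
        ∏ a : {a // a ∈ A},
          (if decide (0 < ⟪(a : EuclideanSpace ℝ (Fin k)), uvec x⟫) = s a then (1:ℝ) else 0) := by
      intro x
      rw [Fintype.prod_boole]
      simp only [ind]
      exact if_congr funext_iff rfl rfl
    have hpos := leb_mul_boolInd hV Finset.univ
      (fun a : {a // a ∈ A} => fun x => ⟪(a : EuclideanSpace ℝ (Fin k)), uvec x⟫) s
      (fun a _ => hφa a) (fun x => max (g i x) 0) (riesz_pos hV.1 (hg i))
      (fun x => le_max_right _ _)
    have hneg := leb_mul_boolInd hV Finset.univ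
      (fun a : {a // a ∈ A} => fun x => ⟪(a : EuclideanSpace ℝ (Fin k)), uvec x⟫) s
      (fun a _ => hφa a) (fun x => max (-(g i x)) 0)
      (riesz_pos hV.1 (riesz_neg hV.1 (hg i))) (fun x => le_max_right _ _)
    have h2 := riesz_sub hV.1 hpos hneg
    convert h2 using 1
    funext x
    simp only [Pi.sub_apply]
    have hmax : max (g i x) 0 - max (-(g i x)) 0 = g i x := by
      rcases le_total (g i x) 0 with h0 | h0
      · rw [max_eq_right h0, max_eq_left (by linarith)]; ring
      · rw [max_eq_left h0, max_eq_right (by linarith)]; ring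
    calc g i x * ind s x
        = (max (g i x) 0 - max (-(g i x)) 0) * ind s x := by rw [hmax]
      _ = _ := by rw [hprod x]; ring
  have hsgnmem : ∀ s i, (fun y => h i y * sgn s y) ∈ W := fun s i =>
    leb_sgnMul hW (hh i) (hψ s)
  -- value of T
  have hTval : ∀ x y, T (x, y) =
      (if 0 < ⟪rep (pat (uvec x)), vvec y⟫ then (1:ℝ) else -1) * ∑ i, g i x * h i y := by
    intro x y
    have h1 : T (x, y) = ∑ p : ({a // a ∈ A} → Bool) × Fin k,
        (g p.2 x * ind p.1 x) * (h p.2 y * sgn p.1 y) := by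
      exact Finset.sum_apply _ _ _
    rw [h1, Fintype.sum_prod_type]
    have h2 : ∀ s : {a // a ∈ A} → Bool,
        ∑ i, (g i x * ind s x) * (h i y * sgn s y)
          = if pat (uvec x) = s then ∑ i, (g i x * h i y) * sgn s y else 0 := by
      intro s
      simp only [ind]
      split_ifs with hs
      · apply Finset.sum_congr rfl; intro i _; ring
      · simp
    rw [Finset.sum_congr rfl (fun s _ => h2 s), Finset.sum_ite_eq]
    simp only [Finset.mem_univ, if_true]
    rw [← Finset.sum_mul]
    exact mul_comm _ _
  refine ⟨T, tensorSet_sum _ _ (fun p => hindmem p.1 p.2) (fun p => hsgnmem p.1 p.2), ?_, ?_⟩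
  · intro x y
    rw [hTval]
    split_ifs <;> simp [abs_mul]
  · intro x y
    show |(|∑ i, g i x * h i y|) - T (x, y)| ≤ 4 * δ * ‖uvec x‖ * ‖vvec y‖
    have hip : ⟪uvec x, vvec y⟫ = ∑ i, g i x * h i y := by
      simp [PiLp.inner_apply, RCLike.inner_apply, uvec, vvec, euclid, mul_comm]
    by_cases hu0 : uvec x = 0
    · have ht : (∑ i, g i x * h i y) = 0 := by
        rw [← hip, hu0, inner_zero_left]
      rw [hTval, ht]
      simp only [mul_zero, sub_zero, abs_zero]
      positivity
    · set c : ℝ := ‖uvec x‖ with hc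
      have hcpos : 0 < c := norm_pos_iff.mpr hu0
      set w : EuclideanSpace ℝ (Fin k) := c⁻¹ • uvec x with hw
      have hw1 : ‖w‖ = 1 := by
        rw [hw, norm_smul, norm_inv, Real.norm_eq_abs, abs_of_pos hcpos, ← hc,
          inv_mul_cancel₀ hcpos.ne']
      have hpatw : pat w = pat (uvec x) := by
        funext a
        simp only [pat]
        apply decide_eq_decide.mpr
        rw [hw, real_inner_smul_right]
        exact mul_pos_iff_of_pos_left (inv_pos.mpr hcpos)
      have hex : ∃ r : EuclideanSpace ℝ (Fin k), ‖r‖ = 1 ∧ pat r = pat (uvec x) :=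
        ⟨w, hw1, hpatw⟩
      have hrep : ‖rep (pat (uvec x))‖ = 1 ∧
          pat (rep (pat (uvec x))) = pat (uvec x) := by
        simp only [rep, dif_pos hex]
        exact hex.choose_spec
      set r : EuclideanSpace ℝ (Fin k) := rep (pat (uvec x)) with hr
      have hclose : ‖w - r‖ ≤ 2 * δ := by
        apply same_pattern_close hδ A hAnet hw1 hrep.1
        intro a ha
        have := congrFun (hpatw.trans hrep.2.symm) ⟨a, ha⟩
        exact decide_eq_decide.mp this
      set v : EuclideanSpace ℝ (Fin k) := vvec y with hv
      set σ : ℝ := if 0 < ⟪r, v⟫ then 1 else -1 with hσ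
      have hσrv : 0 ≤ σ * ⟪r, v⟫ := by
        rw [hσ]; split_ifs with h1
        · positivity
        · push_neg at h1; nlinarith
      have hσabs : |σ| = 1 := by
        rw [hσ]; split_ifs <;> simp
      have hie : |⟪w - r, v⟫| ≤ 2 * δ * ‖v‖ := by
        calc |⟪w - r, v⟫| ≤ ‖w - r‖ * ‖v‖ := abs_real_inner_le_norm _ _
        _ ≤ 2 * δ * ‖v‖ := by
            apply mul_le_mul_of_nonneg_right hclose (norm_nonneg _)
      have h2 : -(2 * δ * ‖v‖) ≤ σ * ⟪w, v⟫ := by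
        have hsplit : ⟪w, v⟫ = ⟪r, v⟫ + ⟪w - r, v⟫ := by
          rw [inner_sub_left]; ring
        have h3 : |σ * ⟪w - r, v⟫| = |⟪w - r, v⟫| := by
          rw [abs_mul, hσabs, one_mul]
        have h4 := (abs_le.mp ((le_of_eq h3).trans hie)).1
        calc -(2 * δ * ‖v‖) ≤ 0 + σ * ⟪w - r, v⟫ := by linarith
        _ ≤ σ * ⟪r, v⟫ + σ * ⟪w - r, v⟫ := by linarith
        _ = σ * ⟪w, v⟫ := by rw [hsplit]; ring
      set t : ℝ := ∑ i, g i x * h i y with htdef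
      have htc : t = c * ⟪w, v⟫ := by
        rw [← hip, hw, real_inner_smul_left]
        field_simp
      have hσt : -(2 * δ * c * ‖v‖) ≤ σ * t := by
        rw [htc]
        have := mul_le_mul_of_nonneg_left h2 hcpos.le
        calc -(2 * δ * c * ‖v‖) = c * -(2 * δ * ‖v‖) := by ring
        _ ≤ c * (σ * ⟪w, v⟫) := this
        _ = σ * (c * ⟪w, v⟫) := by ring
      have hTv : T (x, y) = σ * t := by rw [hTval]
      have habs : |t| = |σ * t| := by rw [abs_mul, hσabs, one_mul]
      have h5 : 0 ≤ |t| - σ * t := by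
        rw [habs]; linarith [le_abs_self (σ * t)]
      rw [hTv, abs_of_nonneg h5]
      rcases abs_cases (σ * t) with ⟨he, _⟩ | ⟨he, _⟩
      · rw [habs, he]
        have : (0:ℝ) ≤ 4 * δ * c * ‖v‖ := by positivity
        linarith
      · rw [habs, he]
        have hvn : 0 ≤ ‖v‖ := norm_nonneg _
        nlinarith [hσt]
end approx
theorem stmt10 {X Y : Type*} (V : Set (X → ℝ)) (W : Set (Y → ℝ))
    (hV : IsLebesgue V) (hW : IsLebesgue W) :
    ∀ f ∈ TensorSet V W, |f| ∈ Pdom (TensorSet V W) := by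
  classical
  rintro f ⟨k, g, h, hg, hh, rfl⟩
  set F0 : X × Y → ℝ := ∑ i, tensor (fun x => |g i x|) (fun y => |h i y|) with hF0
  have hF0mem : F0 ∈ TensorSet V W :=
    tensorSet_sum _ _ (fun i => hV.1.2 (g i) (hg i)) (fun i => hW.1.2 (h i) (hh i))
  have hdom : ∀ p : X × Y, |(∑ i, tensor (g i) (h i)) p| ≤ F0 p := by
    intro p
    rw [hF0, Finset.sum_apply, Finset.sum_apply]
    calc |∑ i, tensor (g i) (h i) p| ≤ ∑ i, |tensor (g i) (h i) p| :=
          Finset.abs_sum_le_sum_abs _ _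
    _ = ∑ i, tensor (fun x => |g i x|) (fun y => |h i y|) p := by
        apply Finset.sum_congr rfl
        intro i _
        simp [tensor, abs_mul]
  have happrox : ∀ n : ℕ, ∃ T ∈ TensorSet V W,
      (∀ x y, |T (x, y)| ≤ |∑ i, g i x * h i y|) ∧
      (∀ x y, |(|∑ i, g i x * h i y|) - T (x, y)| ≤
        4 * ((1:ℝ)/((n:ℝ)+1)) * ‖euclid (fun i => g i x)‖ *
          ‖euclid (fun i => h i y)‖) := by
    intro n
    exact approx_step hV hW k g h hg hh (by positivity)
  choose T hTmem hTle hTerr using happrox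
  set F : ℕ → X × Y → ℝ := fun n => Nat.casesOn n F0 T with hFdef
  have hsumval : ∀ x y, (∑ i, tensor (g i) (h i)) (x, y) = ∑ i, g i x * h i y := by
    intro x y
    rw [Finset.sum_apply]
    rfl
  refine ⟨F, ?_, ?_, ?_⟩
  · rintro (_ | n)
    · exact hF0mem
    · exact hTmem n
  · intro n p
    have h1 : |F (n + 1)| p = |T n p| := rfl
    rw [h1]
    have h2 := hTle n p.1 p.2
    calc |T n p| = |T n (p.1, p.2)| := rfl
    _ ≤ |∑ i, g i p.1 * h i p.2| := h2
    _ = |(∑ i, tensor (g i) (h i)) p| := by rw [hsumval p.1 p.2]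
    _ ≤ F0 p := hdom p
  · rintro ⟨x, y⟩
    have hval : (|∑ i, tensor (g i) (h i)|) (x, y) = |∑ i, g i x * h i y| := by
      rw [Pi.abs_apply, hsumval]
    rw [hval]
    set t : ℝ := ∑ i, g i x * h i y with ht
    set C : ℝ := 4 * ‖euclid (fun i => g i x)‖ * ‖euclid (fun i => h i y)‖ with hC
    have key : Tendsto (fun n : ℕ => F n (x, y) - |t|) atTop (𝓝 0) := by
      apply squeeze_zero_norm' (a := fun n : ℕ => C / (n : ℝ))
      · filter_upwards [eventually_ge_atTop 1] with n hn
        obtain ⟨m, rfl⟩ : ∃ m, n = m + 1 := ⟨n - 1, by omega⟩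
        have h3 := hTerr m x y
        have h4 : F (m + 1) (x, y) = T m (x, y) := rfl
        rw [Real.norm_eq_abs, h4, abs_sub_comm]
        calc |(|t|) - T m (x, y)| ≤ 4 * ((1:ℝ)/((m:ℝ)+1)) * ‖euclid (fun i => g i x)‖ *
            ‖euclid (fun i => h i y)‖ := h3
        _ = C / (((m + 1 : ℕ) : ℝ)) := by push_cast; field_simp; rw [hC]
      · exact tendsto_const_div_atTop_nhds_zero_nat C
    have := key.add_const (|t|)
    simpa using this
end

section
/- Let V and W be Lebesgue lattices over X and Y, and J : V → ℝ, K : W → ℝ Daniell integrals. Then every f ∈ L(V ⊗ W) satisfies: f^x := f(x,·) ∈ W for all x ∈ X, and the function Kf : x ↦ K(f^x) belongs to V; moreover I(f) := J(Kf) defines a Daniell integral on L(V ⊗ W). -/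
open Filter Topology

section RieszBasics

variable {Z : Type*} {R : Set (Z → ℝ)}

lemma IsRiesz.neg_mem_s13 (hR : IsRiesz R) {f} (hf : f ∈ R) : -f ∈ R := by
  have := hR.1.2.2 (-1) f hf
  simpa using this

lemma IsRiesz.sub_mem_s13 (hR : IsRiesz R) {f g} (hf : f ∈ R) (hg : g ∈ R) : f - g ∈ R := by
  have := hR.1.2.1 f (-g) hf (hR.neg_mem_s13 hg)
  simpa [sub_eq_add_neg] using this

lemma IsRiesz.max_mem (hR : IsRiesz R) {f g} (hf : f ∈ R) (hg : g ∈ R) :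
    (fun z => max (f z) (g z)) ∈ R := by
  have h1 : f + g + |f - g| ∈ R := hR.1.2.1 _ _ (hR.1.2.1 f g hf hg) (hR.2 _ (hR.sub_mem_s13 hf hg))
  have h2 := hR.1.2.2 (1/2 : ℝ) _ h1
  have : (fun z => max (f z) (g z)) = (1/2 : ℝ) • (f + g + |f - g|) := by
    funext z
    simp only [Pi.smul_apply, Pi.add_apply, Pi.abs_apply, Pi.sub_apply, smul_eq_mul]
    rcases le_total (f z) (g z) with h | h
    · rw [max_eq_right h, abs_of_nonpos (by linarith)]; ring
    · rw [max_eq_left h, abs_of_nonneg (by linarith)]; ring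
  rwa [this]

lemma IsRiesz.sum_mem {ι : Type*} (hR : IsRiesz R) (s : Finset ι) (f : ι → Z → ℝ)
    (hf : ∀ i ∈ s, f i ∈ R) : (∑ i ∈ s, f i) ∈ R := by
  classical
  induction s using Finset.induction with
  | empty => simpa using hR.1.1
  | insert _ _ hni ih =>
    rw [Finset.sum_insert hni]
    exact hR.1.2.1 _ _ (hf _ (Finset.mem_insert_self _ _))
      (ih fun i hi => hf i (Finset.mem_insert_of_mem hi))

end RieszBasics

section DaniellBasics

variable {Z : Type*} {R : Set (Z → ℝ)} {I : (Z → ℝ) → ℝ}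

lemma IsDaniell.nonneg (hI : IsDaniell R I) {f} (hf : f ∈ R) (h0 : 0 ≤ f) : 0 ≤ I f := by
  have hneg : I ((-1 : ℝ) • f) = -I f := by
    have := hI.2.2.1 (-1) f hf; simpa using this
  have habs : |(-1 : ℝ) • f| = f := by
    funext z
    simp [abs_of_nonneg (h0 z)]
  have := hI.2.2.2.1 ((-1 : ℝ) • f) (hI.1.1.2.2 (-1) f hf)
  rw [hneg, habs] at this
  linarith

lemma IsDaniell.neg (hI : IsDaniell R I) {f} (hf : f ∈ R) : I (-f) = -I f := by
  have := hI.2.2.1 (-1) f hf; simpa using this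

lemma IsDaniell.sub (hI : IsDaniell R I) {f g} (hf : f ∈ R) (hg : g ∈ R) :
    I (f - g) = I f - I g := by
  have hng : -g ∈ R := hI.1.neg_mem_s13 hg
  have h1 := hI.2.1 f (-g) hf hng
  rw [hI.neg hg] at h1
  simpa [sub_eq_add_neg] using h1

lemma IsDaniell.mono (hI : IsDaniell R I) {f g} (hf : f ∈ R) (hg : g ∈ R) (h : f ≤ g) :
    I f ≤ I g := by
  have h1 : 0 ≤ I (g - f) := hI.nonneg (hI.1.sub_mem_s13 hg hf) (fun z => by
    have := h z; simp only [Pi.sub_apply, Pi.zero_apply]; linarith)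
  rw [hI.sub hg hf] at h1; linarith

lemma IsDaniell.abs_le (hI : IsDaniell R I) {f} (hf : f ∈ R) : |I f| ≤ I |f| := by
  rcases abs_cases (I f) with ⟨h, _⟩ | ⟨h, _⟩
  · rw [h]; exact hI.2.2.2.1 f hf
  · rw [h]
    have h2 := hI.2.2.2.1 (-f) (hI.1.neg_mem_s13 hf)
    rw [hI.neg hf, abs_neg] at h2
    linarith

end DaniellBasics
section DCT

variable {Z : Type*} {R : Set (Z → ℝ)} {I : (Z → ℝ) → ℝ}

lemma daniell_dct (hL : IsLebesgue R) (hI : IsDaniell R I) (F : ℕ → Z → ℝ) (f : Z → ℝ)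
    (hFR : ∀ n, F n ∈ R) (hdom : ∀ n, |F (n + 1)| ≤ F 0)
    (hconv : ∀ z, Tendsto (fun n => F n z) atTop (𝓝 (f z))) :
    f ∈ R ∧ Tendsto (fun n => I (F n)) atTop (𝓝 (I f)) := by
  have hf : f ∈ R := hL.2 ⟨F, hFR, hdom, hconv⟩
  have hF0 : ∀ z, 0 ≤ F 0 z := fun z => (abs_nonneg _).trans (hdom 0 z)
  have hfb : ∀ z, |f z| ≤ F 0 z := by
    intro z
    refine le_of_tendsto ((hconv z).abs) ?_
    filter_upwards [eventually_ge_atTop 1] with n hn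
    obtain ⟨m, rfl⟩ := Nat.exists_eq_add_of_le hn
    have := hdom m z
    rw [add_comm 1 m]
    simpa using this
  -- a m = |F m - f|
  set a : ℕ → Z → ℝ := fun m z => |F m z - f z| with ha
  have haR : ∀ m, (fun z => a m z) ∈ R := by
    intro m
    have : (fun z => a m z) = |F m - f| := by funext z; simp [ha]
    rw [this]; exact hL.1.2 _ (hL.1.sub_mem_s13 (hFR m) hf)
  have hab : ∀ m z, a (m + 1) z ≤ 2 * F 0 z := by
    intro m z
    calc a (m+1) z ≤ |F (m+1) z| + |f z| := abs_sub _ _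
    _ ≤ F 0 z + F 0 z := add_le_add (hdom m z) (hfb z)
    _ = 2 * F 0 z := by ring
  -- partial maxima
  set q : ℕ → ℕ → Z → ℝ := fun n => Nat.rec (a (n + 1))
    (fun k qk z => max (qk z) (a (n + 1 + (k + 1)) z)) with hq
  have hq0 : ∀ n, q n 0 = a (n + 1) := fun n => rfl
  have hqs : ∀ n k z, q n (k + 1) z = max (q n k z) (a (n + 1 + (k + 1)) z) := fun n k z => rfl
  have hqR : ∀ n k, q n k ∈ R := by
    intro n k
    induction k with
    | zero => exact haR (n + 1)
    | succ k ih =>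
      have := hL.1.max_mem ih (haR (n + 1 + (k + 1)))
      convert this using 1
  have hq_le : ∀ n k z, q n k z ≤ 2 * F 0 z := by
    intro n k z
    induction k with
    | zero => exact hab n z
    | succ k ih =>
      refine max_le ih ?_
      rw [show n + 1 + (k + 1) = n + k + 1 + 1 from by ring]
      exact hab (n + k + 1) z
  have hq_mono : ∀ n z, Monotone (fun k => q n k z) := by
    intro n z
    apply monotone_nat_of_le_succ
    intro k
    exact le_max_left _ _
  have hq_nonneg : ∀ n k z, 0 ≤ q n k z := by
    intro n k z
    refine le_trans ?_ (hq_mono n z (Nat.zero_le k))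
    exact abs_nonneg _
  have hbdd : ∀ n z, BddAbove (Set.range fun k => q n k z) :=
    fun n z => ⟨2 * F 0 z, by rintro x ⟨k, rfl⟩; exact hq_le n k z⟩
  -- u n = sup_k q n k
  set u : ℕ → Z → ℝ := fun n z => ⨆ k, q n k z with hu
  have hqu : ∀ n k z, q n k z ≤ u n z := fun n k z => le_ciSup (hbdd n z) k
  have hu_tendsto : ∀ n z, Tendsto (fun k => q n k z) atTop (𝓝 (u n z)) :=
    fun n z => tendsto_atTop_ciSup (hq_mono n z) (hbdd n z)
  have hu_le : ∀ n z, u n z ≤ 2 * F 0 z := fun n z => ciSup_le fun k => hq_le n k z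
  have hu_nonneg : ∀ n z, 0 ≤ u n z := fun n z => le_trans (hq_nonneg n 0 z) (hqu n 0 z)
  have huR : ∀ n, u n ∈ R := by
    intro n
    apply hL.2
    refine ⟨fun k => Nat.rec ((2 : ℝ) • F 0) (fun k _ => q n k) k, ?_, ?_, ?_⟩
    · intro k
      cases k with
      | zero => exact hL.1.1.2.2 2 (F 0) (hFR 0)
      | succ k => exact hqR n k
    · intro k z
      simp only [Pi.abs_apply, Pi.smul_apply, smul_eq_mul]
      rw [abs_of_nonneg (hq_nonneg n k z)]
      exact hq_le n k z
    · intro z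
      rw [← tendsto_add_atTop_iff_nat 1]
      exact hu_tendsto n z
  have hq_anti : ∀ n k z, q (n + 1) k z ≤ q n (k + 1) z := by
    intro n k z
    induction k with
    | zero =>
      show a (n + 1 + 1) z ≤ q n (0 + 1) z
      rw [show n + 1 + 1 = n + 1 + (0 + 1) from by ring]
      exact (le_max_right _ _).trans_eq (hqs n 0 z).symm
    | succ k ih =>
      have hstep : q n (k + 1) z ≤ q n (k + 1 + 1) z := hq_mono n z (Nat.le_succ (k + 1))
      refine max_le (ih.trans hstep) ?_
      rw [show n + 1 + 1 + (k + 1) = n + 1 + (k + 1 + 1) from by ring]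
      exact (le_max_right _ _).trans_eq (hqs n (k + 1) z).symm
  have hu_anti : ∀ n z, u (n + 1) z ≤ u n z := by
    intro n z
    exact ciSup_le fun k => (hq_anti n k z).trans (hqu n (k + 1) z)
  have hu_zero : ∀ z, Tendsto (fun n => u n z) atTop (𝓝 0) := by
    intro z
    rw [Metric.tendsto_atTop]
    intro ε hε
    have := (Metric.tendsto_atTop.mp (hconv z)) (ε / 2) (by linarith)
    obtain ⟨N, hN⟩ := this
    refine ⟨N, fun n hn => ?_⟩
    have hqe : ∀ k, q n k z ≤ ε / 2 := by
      intro k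
      induction k with
      | zero =>
        rw [hq0]
        have := hN (n + 1) (by omega)
        rw [Real.dist_eq] at this
        exact this.le
      | succ k ih =>
        rw [hqs]
        refine max_le ih ?_
        have := hN (n + 1 + (k + 1)) (by omega)
        rw [Real.dist_eq] at this
        exact this.le
    have h1 : u n z ≤ ε / 2 := ciSup_le hqe
    rw [Real.dist_eq, sub_zero, abs_of_nonneg (hu_nonneg n z)]
    linarith
  have hIu : Tendsto (fun n => I (u n)) atTop (𝓝 0) :=
    hI.2.2.2.2 u huR (fun n => fun z => hu_nonneg (n + 1) z) (fun n => fun z => hu_anti n z) hu_zero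
  have hbound : ∀ n, |I (F (n + 1)) - I f| ≤ I (u n) := by
    intro n
    rw [← hI.sub (hFR (n + 1)) hf]
    refine (hI.abs_le (hL.1.sub_mem_s13 (hFR (n + 1)) hf)).trans ?_
    refine hI.mono (hL.1.2 _ (hL.1.sub_mem_s13 (hFR (n + 1)) hf)) (huR n) ?_
    intro z
    exact (hqu n 0 z)
  have h2 : Tendsto (fun n => I (F (n + 1)) - I f) atTop (𝓝 0) := by
    apply squeeze_zero_norm (fun n => ?_) hIu
    rw [Real.norm_eq_abs]
    exact hbound n
  have h3 : Tendsto (fun n => I (F (n + 1))) atTop (𝓝 (I f)) := by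
    have := h2.add (tendsto_const_nhds (α := ℕ) (x := I f))
    simpa using this
  exact ⟨hf, (tendsto_add_atTop_iff_nat 1).mp h3⟩

end DCT
section Sublinear

/-- sublinear functional on `ℝ^m` with an ℓ¹ bound. -/
def Sublin {m : ℕ} (φ : (Fin m → ℝ) → ℝ) : Prop :=
  (∀ a b, φ (a + b) ≤ φ a + φ b) ∧ (∀ (c : ℝ), 0 ≤ c → ∀ t, φ (c • t) = c * φ t) ∧
    ∃ L, 0 ≤ L ∧ ∀ t, |φ t| ≤ L * ∑ i, |t i|

lemma Sublin.zero_eval {m : ℕ} {φ : (Fin m → ℝ) → ℝ} (hφ : Sublin φ) : φ 0 = 0 := by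
  have := hφ.2.1 0 le_rfl 0
  simpa using this

lemma Sublin.exists_support {m : ℕ} {φ : (Fin m → ℝ) → ℝ} (hφ : Sublin φ) (hm : 0 < m)
    (t₀ : Fin m → ℝ) :
    ∃ lam : (Fin m → ℝ) →ₗ[ℝ] ℝ, lam t₀ = φ t₀ ∧ ∀ t, lam t ≤ φ t := by
  have hhom : ∀ c : ℝ, 0 < c → ∀ x, φ (c • x) = c * φ x := fun c hc x => hφ.2.1 c hc.le x
  have hkey : ∀ (s : Fin m → ℝ), s ≠ 0 →
      ∃ lam : (Fin m → ℝ) →ₗ[ℝ] ℝ, lam s = φ s ∧ ∀ t, lam t ≤ φ t := by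
    intro s hs
    set f := LinearPMap.mkSpanSingleton (K := ℝ) (L := ℝ) (σ := RingHom.id ℝ) s (φ s) hs with hfdef
    have hf : ∀ x : f.domain, f x ≤ φ x := by
      rintro ⟨x, hx⟩
      have hx2 : x ∈ Submodule.span ℝ {s} := hx
      rw [Submodule.mem_span_singleton] at hx2
      obtain ⟨c, hc⟩ := hx2
      subst hc
      have happ : f ⟨c • s, Submodule.smul_mem _ c (Submodule.mem_span_singleton_self s)⟩
          = c • φ s := LinearPMap.mkSpanSingleton'_apply _ _ _ c _
      rw [happ]
      rcases le_or_gt 0 c with hc | hc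
      · rw [hφ.2.1 c hc s, smul_eq_mul]
      · have hd : (0 : ℝ) < -c := by linarith
        have h1 : φ (c • s) = (-c) * φ (-s) := by
          rw [show c • s = (-c) • (-s) from by simp, hφ.2.1 (-c) hd.le (-s)]
        have h2 : 0 ≤ φ s + φ (-s) := by
          have := hφ.1 s (-s)
          simpa [hφ.zero_eval] using this
        rw [h1, smul_eq_mul]
        nlinarith
    obtain ⟨lam, heq, hle⟩ := exists_extension_of_le_sublinear f φ hhom hφ.1 hf
    refine ⟨lam, ?_, hle⟩
    have := heq ⟨s, Submodule.mem_span_singleton_self s⟩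
    rw [this, LinearPMap.mkSpanSingleton_apply]
  by_cases hs : t₀ = 0
  · obtain ⟨lam, _, hle⟩ := hkey (Pi.single ⟨0, hm⟩ 1) (by
      intro h
      have := congrFun h ⟨0, hm⟩
      simp [Pi.single_apply] at this)
    refine ⟨lam, ?_, hle⟩
    rw [hs, map_zero, hφ.zero_eval]
  · exact hkey t₀ hs

end Sublinear
section Comp

lemma sublin_comp_mem {Z : Type*} {U : Set (Z → ℝ)} (hU : IsLebesgue U) {m : ℕ}
    {φ : (Fin m → ℝ) → ℝ} (hφ : Sublin φ) (g : Fin m → Z → ℝ) (hg : ∀ i, g i ∈ U) :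
    (fun z => φ (fun i => g i z)) ∈ U := by
  rcases Nat.eq_zero_or_pos m with hm | hm
  · subst hm
    have heq : (fun z => φ (fun i => g i z)) = 0 := by
      funext z
      have h0 : (fun i : Fin 0 => g i z) = 0 := by
        funext i; exact absurd i.2 (Nat.not_lt_zero _)
      rw [h0, hφ.zero_eval]; rfl
    rw [heq]; exact hU.1.1.1
  obtain ⟨L, hL0, hLb⟩ := hφ.2.2
  obtain ⟨e, he⟩ := exists_surjective_nat (Fin m → ℚ)
  have hsel : ∀ n : ℕ, ∃ lam : (Fin m → ℝ) →ₗ[ℝ] ℝ,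
      lam (fun i => (e n i : ℝ)) = φ (fun i => (e n i : ℝ)) ∧ ∀ t, lam t ≤ φ t :=
    fun n => hφ.exists_support hm _
  choose lam hlam1 hlam2 using hsel
  have hlamb : ∀ n t, |lam n t| ≤ L * ∑ i, |t i| := by
    intro n t
    rw [abs_le]
    constructor
    · have h1 : lam n (-t) ≤ φ (-t) := hlam2 n (-t)
      have h2 : φ (-t) ≤ L * ∑ i, |t i| := by
        refine (le_abs_self _).trans ((hLb (-t)).trans ?_)
        simp
      have h3 : lam n (-t) = -lam n t := map_neg _ _
      linarith
    · exact (hlam2 n t).trans ((le_abs_self _).trans (hLb t))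
  have hlinmem : ∀ n, (fun z => lam n (fun i => g i z)) ∈ U := by
    intro n
    have heq : (fun z => lam n (fun i => g i z))
        = ∑ i : Fin m, (lam n (fun j => if i = j then 1 else 0)) • g i := by
      funext z
      rw [Finset.sum_apply]
      rw [LinearMap.pi_apply_eq_sum_univ (lam n) (fun i => g i z)]
      refine Finset.sum_congr rfl fun i _ => ?_
      simp [mul_comm]
    rw [heq]
    exact hU.1.sum_mem _ _ fun i _ => hU.1.1.2.2 _ _ (hg i)
  -- partial maxima
  set p : ℕ → Z → ℝ := fun k => Nat.rec (fun z => lam 0 (fun i => g i z))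
    (fun k pk z => max (pk z) (lam (k + 1) (fun i => g i z))) k with hp
  have hp0 : ∀ z, p 0 z = lam 0 (fun i => g i z) := fun z => rfl
  have hps : ∀ k z, p (k + 1) z = max (p k z) (lam (k + 1) (fun i => g i z)) := fun k z => rfl
  have hpmem : ∀ k, p k ∈ U := by
    intro k
    induction k with
    | zero => exact hlinmem 0
    | succ k ih => exact hU.1.max_mem ih (hlinmem (k + 1))
  have hple : ∀ k z, p k z ≤ φ (fun i => g i z) := by
    intro k z
    induction k with
    | zero => exact hlam2 0 _
    | succ k ih => exact max_le ih (hlam2 (k + 1) _)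
  have hpb : ∀ k z, |p k z| ≤ L * ∑ i, |g i z| := by
    intro k z
    induction k with
    | zero => exact hlamb 0 _
    | succ k ih =>
      refine (abs_max_le_max_abs_abs).trans (max_le ih (hlamb (k + 1) _))
  have hpmono : ∀ z, Monotone fun k => p k z := by
    intro z
    apply monotone_nat_of_le_succ
    intro k
    exact le_max_left _ _
  have hpge : ∀ n k z, n ≤ k → lam n (fun i => g i z) ≤ p k z := by
    intro n k z hnk
    induction k with
    | zero =>
      rw [Nat.le_zero] at hnk; subst hnk; exact le_of_eq (hp0 z).symm
    | succ k ih =>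
      rcases Nat.lt_or_ge n (k + 1) with h | h
      · exact (ih (Nat.lt_succ_iff.mp h)).trans (le_max_left _ _)
      · have : n = k + 1 := le_antisymm hnk h
        subst this
        exact le_max_right _ _
  have hpconv : ∀ z, Tendsto (fun k => p k z) atTop (𝓝 (φ (fun i => g i z))) := by
    intro z
    rw [Metric.tendsto_atTop]
    intro ε hε
    set s : Fin m → ℝ := fun i => g i z with hs
    set δ : ℝ := ε / (2 * L + 1) with hδ
    have hδ0 : 0 < δ := by positivity
    have hδm : 0 < δ / m := by positivity
    have hrat : ∀ i : Fin m, ∃ q : ℚ, |s i - (q : ℝ)| < δ / m :=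
      fun i => exists_rat_near (s i) hδm
    choose t ht using hrat
    obtain ⟨n, hn⟩ := he t
    have hsum : ∑ i, |s i - (t i : ℝ)| < δ := by
      calc ∑ i, |s i - (t i : ℝ)| < ∑ _i : Fin m, δ / m := by
            refine Finset.sum_lt_sum_of_nonempty ?_ fun i _ => ht i
            exact Finset.univ_nonempty_iff.mpr (Fin.pos_iff_nonempty.mp hm)
      _ = m * (δ / m) := by rw [Finset.sum_const]; simp [mul_comm]
      _ = δ := by field_simp
    set t' : Fin m → ℝ := fun i => (t i : ℝ) with ht'
    have hdiff : ∑ i, |(s - t') i| = ∑ i, |s i - (t i : ℝ)| := by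
      refine Finset.sum_congr rfl fun i _ => rfl
    have h1 : lam n s = lam n t' + lam n (s - t') := by
      rw [← map_add]; congr 1; abel
    have h2 : lam n t' = φ t' := by
      have := hlam1 n
      rw [hn] at this
      exact this
    have h3 : φ s ≤ φ t' + L * δ := by
      have hsub := hφ.1 t' (s - t')
      have : t' + (s - t') = s := by abel
      rw [this] at hsub
      have h4 : φ (s - t') ≤ L * ∑ i, |(s - t') i| := (le_abs_self _).trans (hLb _)
      have h5 : L * ∑ i, |(s - t') i| ≤ L * δ := by
        rw [hdiff]
        exact mul_le_mul_of_nonneg_left hsum.le hL0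
      linarith
    have h6 : |lam n (s - t')| ≤ L * δ := by
      refine (hlamb n _).trans ?_
      rw [hdiff]
      exact mul_le_mul_of_nonneg_left hsum.le hL0
    have hkey : φ s - ε < lam n s := by
      have : lam n s ≥ φ t' - L * δ := by
        rw [h1, h2]
        have := (abs_le.mp h6).1
        linarith
      have hδε : 2 * L * δ < ε := by
        have h2L : (0:ℝ) < 2 * L + 1 := by positivity
        rw [hδ, mul_div_assoc', div_lt_iff₀ h2L]
        nlinarith
      linarith
    refine ⟨n, fun k hk => ?_⟩
    rw [Real.dist_eq, abs_of_nonpos (by linarith [hple k z] : p k z - φ s ≤ 0)]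
    have := hpge n k z hk
    linarith [hple k z]
  -- conclude by Pdom
  apply hU.2
  refine ⟨fun k => Nat.rec (L • ∑ i : Fin m, |g i|) (fun k _ => p k) k, ?_, ?_, ?_⟩
  · intro k
    cases k with
    | zero =>
      exact hU.1.1.2.2 L _ (hU.1.sum_mem _ _ fun i _ => hU.1.2 _ (hg i))
    | succ k => exact hpmem k
  · intro k z
    simp only [Pi.abs_apply, Pi.smul_apply, smul_eq_mul, Finset.sum_apply]
    exact (hpb k z).trans (le_of_eq (by simp))
  · intro z
    rw [← tendsto_add_atTop_iff_nat 1]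
    exact hpconv z

end Comp
section SublinOps

variable {m m' : ℕ} {φ ψ : (Fin m → ℝ) → ℝ}

lemma sublin_smul {c : ℝ} (hc : 0 ≤ c) (hφ : Sublin φ) : Sublin (fun t => c * φ t) := by
  obtain ⟨L, hL0, hLb⟩ := hφ.2.2
  refine ⟨fun a b => ?_, fun d hd t => ?_, c * L, by positivity, fun t => ?_⟩
  · dsimp only; have := hφ.1 a b; nlinarith
  · dsimp only; rw [hφ.2.1 d hd t]; ring
  · rw [abs_mul, abs_of_nonneg hc, mul_assoc]
    exact mul_le_mul_of_nonneg_left (hLb t) hc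

lemma sublin_add (hφ : Sublin φ) (hψ : Sublin ψ) : Sublin (fun t => φ t + ψ t) := by
  obtain ⟨L, hL0, hLb⟩ := hφ.2.2
  obtain ⟨L', hL0', hLb'⟩ := hψ.2.2
  refine ⟨fun a b => ?_, fun d hd t => ?_, L + L', by positivity, fun t => ?_⟩
  · dsimp only; have h1 := hφ.1 a b; have h2 := hψ.1 a b; linarith
  · dsimp only; rw [hφ.2.1 d hd t, hψ.2.1 d hd t]; ring
  · refine (abs_add_le _ _).trans ?_
    have := hLb t; have := hLb' t
    have hs : (0:ℝ) ≤ ∑ i, |t i| := Finset.sum_nonneg fun i _ => abs_nonneg _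
    nlinarith

lemma sublin_two_max (hφ : Sublin φ) (hψ : Sublin ψ) :
    Sublin (fun t => 2 * max (φ t) (ψ t)) := by
  obtain ⟨L, hL0, hLb⟩ := hφ.2.2
  obtain ⟨L', hL0', hLb'⟩ := hψ.2.2
  refine ⟨fun a b => ?_, fun d hd t => ?_, 2 * (L + L'), by positivity, fun t => ?_⟩
  · dsimp only
    have h1 : max (φ (a + b)) (ψ (a + b)) ≤ max (φ a) (ψ a) + max (φ b) (ψ b) := by
      refine max_le ((hφ.1 a b).trans ?_) ((hψ.1 a b).trans ?_)
      · exact add_le_add (le_max_left _ _) (le_max_left _ _)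
      · exact add_le_add (le_max_right _ _) (le_max_right _ _)
    linarith
  · dsimp only
    rw [hφ.2.1 d hd t, hψ.2.1 d hd t]
    rcases le_total (φ t) (ψ t) with h | h
    · rw [max_eq_right h, max_eq_right (by nlinarith : d * φ t ≤ d * ψ t)]; ring
    · rw [max_eq_left h, max_eq_left (by nlinarith : d * ψ t ≤ d * φ t)]; ring
  · have hs : (0:ℝ) ≤ ∑ i, |t i| := Finset.sum_nonneg fun i _ => abs_nonneg _
    rw [abs_mul, abs_two]
    have h1 : |max (φ t) (ψ t)| ≤ max |φ t| |ψ t| := abs_max_le_max_abs_abs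
    have h2 : max |φ t| |ψ t| ≤ (L + L') * ∑ i, |t i| := by
      refine max_le ((hLb t).trans ?_) ((hLb' t).trans ?_) <;> nlinarith
    nlinarith

lemma sublin_append {φ : (Fin m → ℝ) → ℝ} {φ' : (Fin m' → ℝ) → ℝ}
    (hφ : Sublin φ) (hφ' : Sublin φ') :
    Sublin (fun t : Fin (m + m') → ℝ =>
      φ (fun i => t (Fin.castAdd m' i)) + φ' (fun j => t (Fin.natAdd m j))) := by
  obtain ⟨L, hL0, hLb⟩ := hφ.2.2
  obtain ⟨L', hL0', hLb'⟩ := hφ'.2.2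
  refine ⟨fun a b => ?_, fun d hd t => ?_, L + L', by positivity, fun t => ?_⟩
  · have h1 := hφ.1 (fun i => a (Fin.castAdd m' i)) (fun i => b (Fin.castAdd m' i))
    have h2 := hφ'.1 (fun j => a (Fin.natAdd m j)) (fun j => b (Fin.natAdd m j))
    have e1 : (fun i => (a + b) (Fin.castAdd m' i))
        = (fun i => a (Fin.castAdd m' i)) + fun i => b (Fin.castAdd m' i) := rfl
    have e2 : (fun j => (a + b) (Fin.natAdd m j))
        = (fun j => a (Fin.natAdd m j)) + fun j => b (Fin.natAdd m j) := rfl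
    dsimp only
    rw [e1, e2]
    linarith
  · have e1 : (fun i => (d • t) (Fin.castAdd m' i)) = d • fun i => t (Fin.castAdd m' i) := rfl
    have e2 : (fun j => (d • t) (Fin.natAdd m j)) = d • fun j => t (Fin.natAdd m j) := rfl
    dsimp only
    rw [e1, e2, hφ.2.1 d hd _, hφ'.2.1 d hd _]
    ring
  · have hsum := Fin.sum_univ_add (fun i : Fin (m + m') => |t i|)
    have hs1 : (0:ℝ) ≤ ∑ i : Fin m, |t (Fin.castAdd m' i)| :=
      Finset.sum_nonneg fun i _ => abs_nonneg _
    have hs2 : (0:ℝ) ≤ ∑ j : Fin m', |t (Fin.natAdd m j)| :=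
      Finset.sum_nonneg fun i _ => abs_nonneg _
    have h1 := hLb (fun i => t (Fin.castAdd m' i))
    have h2 := hLb' (fun j => t (Fin.natAdd m j))
    refine (abs_add_le _ _).trans ?_
    rw [hsum]
    nlinarith

end SublinOps
section SA

variable {X Y : Type*}

/-- Daniell integral of a finite sum. -/
lemma IsDaniell.map_sum {Z : Type*} {R : Set (Z → ℝ)} {I : (Z → ℝ) → ℝ} (hI : IsDaniell R I)
    {ι : Type*} (s : Finset ι) (f : ι → Z → ℝ) (hf : ∀ i ∈ s, f i ∈ R) :
    I (∑ i ∈ s, f i) = ∑ i ∈ s, I (f i) := by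
  classical
  induction s using Finset.induction with
  | empty =>
    simp only [Finset.sum_empty]
    have := hI.2.2.1 0 0 hI.1.1.1
    simpa using this
  | insert _ _ hni ih =>
    rename_i a s
    rw [Finset.sum_insert hni, Finset.sum_insert hni,
      hI.2.1 _ _ (hf _ (Finset.mem_insert_self _ _))
        (hI.1.sum_mem _ _ fun i hi => hf i (Finset.mem_insert_of_mem hi)),
      ih fun i hi => hf i (Finset.mem_insert_of_mem hi)]

/-- the "Riesz span" of the tensor product, described via differences of sublinear
functionals applied to tensor tuples. -/
def SpanS (V : Set (X → ℝ)) (W : Set (Y → ℝ)) : Set (X × Y → ℝ) :=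
  { f | ∃ (m : ℕ) (g : Fin m → X → ℝ) (h : Fin m → Y → ℝ) (φ ψ : (Fin m → ℝ) → ℝ),
      Sublin φ ∧ Sublin ψ ∧ (∀ i, g i ∈ V) ∧ (∀ i, h i ∈ W) ∧
      ∀ x y, f (x, y) = φ (fun i => g i x * h i y) - ψ (fun i => g i x * h i y) }

/-- the set of "good" functions. -/
def ASet (V : Set (X → ℝ)) (W : Set (Y → ℝ)) (K : (Y → ℝ) → ℝ) : Set (X × Y → ℝ) :=
  { f | (∀ x, (fun y => f (x, y)) ∈ W) ∧ (fun x => K (fun y => f (x, y))) ∈ V }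

lemma zero_sublin {m : ℕ} : Sublin (fun _ : Fin m → ℝ => (0 : ℝ)) :=
  ⟨fun _ _ => by norm_num, fun c _ t => by norm_num,
    ⟨0, le_rfl, fun t => by simp⟩⟩

lemma sum_sublin {m : ℕ} : Sublin (fun t : Fin m → ℝ => ∑ i, t i) := by
  refine ⟨fun a b => ?_, fun c hc t => ?_, 1, zero_le_one, fun t => ?_⟩
  · simp [Finset.sum_add_distrib]
  · simp [Finset.mul_sum]
  · rw [one_mul]
    exact Finset.abs_sum_le_sum_abs _ _

lemma tensor_subset_SpanS {V : Set (X → ℝ)} {W : Set (Y → ℝ)} :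
    TensorSet V W ⊆ SpanS V W := by
  rintro f ⟨k, g, h, hg, hh, rfl⟩
  refine ⟨k, g, h, fun t => ∑ i, t i, fun _ => 0, sum_sublin, zero_sublin, hg, hh, ?_⟩
  intro x y
  rw [Finset.sum_apply]
  simp [tensor]

lemma SpanS_riesz {V : Set (X → ℝ)} {W : Set (Y → ℝ)} : IsRiesz (SpanS V W) := by
  constructor
  · refine ⟨?_, ?_, ?_⟩
    · exact ⟨0, Fin.elim0, Fin.elim0, fun _ => 0, fun _ => 0, zero_sublin, zero_sublin,
        fun i => i.elim0, fun i => i.elim0, fun x y => by simp⟩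
    · rintro f f' ⟨m, g, h, φ, ψ, hφ, hψ, hg, hh, hf⟩ ⟨m', g', h', φ', ψ', hφ', hψ', hg', hh', hf'⟩
      refine ⟨m + m', Fin.append g g', Fin.append h h',
        fun t => φ (fun i => t (Fin.castAdd m' i)) + φ' (fun j => t (Fin.natAdd m j)),
        fun t => ψ (fun i => t (Fin.castAdd m' i)) + ψ' (fun j => t (Fin.natAdd m j)),
        ?_, ?_, ?_, ?_, ?_⟩
      · exact sublin_append hφ hφ'
      · exact sublin_append hψ hψ'
      · intro i
        refine Fin.addCases (fun i => ?_) (fun i => ?_) i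
        · rw [Fin.append_left]; exact hg i
        · rw [Fin.append_right]; exact hg' i
      · intro i
        refine Fin.addCases (fun i => ?_) (fun i => ?_) i
        · rw [Fin.append_left]; exact hh i
        · rw [Fin.append_right]; exact hh' i
      · intro x y
        have e1 : ∀ i : Fin m,
            (fun i' : Fin (m + m') => Fin.append g g' i' x * Fin.append h h' i' y)
              (Fin.castAdd m' i) = g i x * h i y := by
          intro i; simp only [Fin.append_left]
        have e2 : ∀ j : Fin m',
            (fun i' : Fin (m + m') => Fin.append g g' i' x * Fin.append h h' i' y)
              (Fin.natAdd m j) = g' j x * h' j y := by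
          intro j; simp only [Fin.append_right]
        simp only [Pi.add_apply]
        rw [hf x y, hf' x y]
        have e1' : (fun i => (fun i' : Fin (m + m') =>
            Fin.append g g' i' x * Fin.append h h' i' y) (Fin.castAdd m' i))
            = fun i => g i x * h i y := funext e1
        have e2' : (fun j => (fun i' : Fin (m + m') =>
            Fin.append g g' i' x * Fin.append h h' i' y) (Fin.natAdd m j))
            = fun j => g' j x * h' j y := funext e2
        rw [e1', e2']
        ring
    · rintro c f ⟨m, g, h, φ, ψ, hφ, hψ, hg, hh, hf⟩
      rcases le_or_gt 0 c with hc | hc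
      · exact ⟨m, g, h, fun t => c * φ t, fun t => c * ψ t, sublin_smul hc hφ,
          sublin_smul hc hψ, hg, hh, fun x y => by
            simp only [Pi.smul_apply, smul_eq_mul]; rw [hf x y]; ring⟩
      · refine ⟨m, g, h, fun t => (-c) * ψ t, fun t => (-c) * φ t,
          sublin_smul (by linarith) hψ, sublin_smul (by linarith) hφ, hg, hh, fun x y => by
            simp only [Pi.smul_apply, smul_eq_mul]; rw [hf x y]; ring⟩
  · rintro f ⟨m, g, h, φ, ψ, hφ, hψ, hg, hh, hf⟩
    refine ⟨m, g, h, fun t => 2 * max (φ t) (ψ t), fun t => φ t + ψ t,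
      sublin_two_max hφ hψ, sublin_add hφ hψ, hg, hh, fun x y => ?_⟩
    rw [Pi.abs_apply, hf x y]
    dsimp only
    rcases le_total (φ (fun i => g i x * h i y)) (ψ (fun i => g i x * h i y)) with hle | hle
    · rw [abs_of_nonpos (by linarith), max_eq_right hle]; ring
    · rw [abs_of_nonneg (by linarith), max_eq_left hle]; ring

end SA
section SAProps

variable {X Y : Type*} {V : Set (X → ℝ)} {W : Set (Y → ℝ)} {K : (Y → ℝ) → ℝ}

lemma sublin_scale {m : ℕ} {φ : (Fin m → ℝ) → ℝ} (hφ : Sublin φ) (c : Fin m → ℝ) :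
    Sublin (fun t : Fin m → ℝ => φ (fun i => c i * t i)) := by
  obtain ⟨L, hL0, hLb⟩ := hφ.2.2
  refine ⟨fun a b => ?_, fun d hd t => ?_, L * ∑ j, |c j|, ?_, fun t => ?_⟩
  · dsimp only
    have e : (fun i => c i * (a + b) i) = (fun i => c i * a i) + fun i => c i * b i := by
      funext i; simp [Pi.add_apply]; ring
    rw [e]; exact hφ.1 _ _
  · dsimp only
    have e : (fun i => c i * (d • t) i) = d • fun i => c i * t i := by
      funext i; simp [Pi.smul_apply]; ring
    rw [e]; exact hφ.2.1 d hd _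
  · have : (0:ℝ) ≤ ∑ j, |c j| := Finset.sum_nonneg fun j _ => abs_nonneg _
    positivity
  · dsimp only
    refine (hLb _).trans ?_
    have h1 : ∑ i, |c i * t i| ≤ ∑ i, (∑ j, |c j|) * |t i| := by
      refine Finset.sum_le_sum fun i _ => ?_
      rw [abs_mul]
      exact mul_le_mul_of_nonneg_right
        (Finset.single_le_sum (f := fun j => |c j|) (fun j _ => abs_nonneg _)
          (Finset.mem_univ i)) (abs_nonneg _)
    have h2 : ∑ i, (∑ j, |c j|) * |t i| = (∑ j, |c j|) * ∑ i, |t i| := by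
      rw [← Finset.mul_sum]
    calc L * ∑ i, |c i * t i| ≤ L * ((∑ j, |c j|) * ∑ i, |t i|) := by
          rw [← h2]; exact mul_le_mul_of_nonneg_left h1 hL0
    _ = L * (∑ j, |c j|) * ∑ i, |t i| := by ring

lemma sec_mem (hW : IsLebesgue W) {m : ℕ} {φ : (Fin m → ℝ) → ℝ} (hφ : Sublin φ)
    (c : Fin m → ℝ) (h : Fin m → Y → ℝ) (hh : ∀ i, h i ∈ W) :
    (fun y => φ (fun i => c i * h i y)) ∈ W :=
  sublin_comp_mem hW (sublin_scale hφ c) h hh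

lemma Ksec_sublin (hW : IsLebesgue W) (hK : IsDaniell W K) {m : ℕ}
    {φ : (Fin m → ℝ) → ℝ} (hφ : Sublin φ) (h : Fin m → Y → ℝ) (hh : ∀ i, h i ∈ W) :
    Sublin (fun t : Fin m → ℝ => K (fun y => φ (fun i => t i * h i y))) := by
  obtain ⟨L, hL0, hLb⟩ := hφ.2.2
  have hKh0 : ∀ i, 0 ≤ K |h i| := fun i =>
    hK.nonneg (hW.1.2 _ (hh i)) fun y => abs_nonneg _
  refine ⟨fun a b => ?_, fun d hd t => ?_, L * ∑ j, K |h j|, ?_, fun t => ?_⟩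
  · dsimp only
    have ha := sec_mem hW hφ a h hh
    have hb := sec_mem hW hφ b h hh
    have hab := sec_mem hW hφ (a + b) h hh
    have hpt : (fun y => φ (fun i => (a + b) i * h i y))
        ≤ (fun y => φ (fun i => a i * h i y)) + fun y => φ (fun i => b i * h i y) := by
      intro y
      simp only [Pi.add_apply]
      have e : (fun i => (a i + b i) * h i y)
          = (fun i => a i * h i y) + fun i => b i * h i y := by
        funext i; simp only [Pi.add_apply]; ring
      rw [e]
      exact hφ.1 _ _
    refine le_trans (hK.mono hab (hW.1.1.2.1 _ _ ha hb) hpt) ?_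
    rw [hK.2.1 _ _ ha hb]
  · dsimp only
    have e : (fun y => φ (fun i => (d • t) i * h i y))
        = d • fun y => φ (fun i => t i * h i y) := by
      funext y
      simp only [Pi.smul_apply, smul_eq_mul]
      have e2 : (fun i => d * t i * h i y) = d • fun i => t i * h i y := by
        funext i; simp only [Pi.smul_apply, smul_eq_mul]; ring
      rw [e2, hφ.2.1 d hd _]
    rw [e, hK.2.2.1 d _ (sec_mem hW hφ t h hh)]
  · have : (0:ℝ) ≤ ∑ j, K |h j| := Finset.sum_nonneg fun j _ => hKh0 j
    positivity
  · dsimp only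
    set u := fun y => φ (fun i => t i * h i y) with hu
    have hus : u ∈ W := sec_mem hW hφ t h hh
    refine (hK.abs_le hus).trans ?_
    set B : Y → ℝ := ∑ i, (L * |t i|) • |h i| with hB
    have hBW : B ∈ W := hW.1.sum_mem _ _ fun i _ => hW.1.1.2.2 _ _ (hW.1.2 _ (hh i))
    have hle : |u| ≤ B := by
      intro y
      simp only [Pi.abs_apply, hB, Finset.sum_apply, Pi.smul_apply, Pi.abs_apply, smul_eq_mul]
      refine (hLb _).trans ?_
      rw [Finset.mul_sum]
      refine Finset.sum_le_sum fun i _ => ?_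
      rw [abs_mul]; ring_nf; rfl
    refine (hK.mono (hW.1.2 _ hus) hBW hle).trans ?_
    rw [hK.map_sum _ _ fun i _ => hW.1.1.2.2 _ _ (hW.1.2 _ (hh i))]
    have he : ∀ i, K ((L * |t i|) • |h i|) = L * |t i| * K |h i| :=
      fun i => hK.2.2.1 _ _ (hW.1.2 _ (hh i))
    rw [Finset.sum_congr rfl fun i _ => he i]
    calc ∑ i, L * |t i| * K |h i| ≤ ∑ i, L * |t i| * ∑ j, K |h j| := by
          refine Finset.sum_le_sum fun i _ => ?_
          have hL1 : 0 ≤ L * |t i| := by positivity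
          exact mul_le_mul_of_nonneg_left
            (Finset.single_le_sum (f := fun j => K |h j|) (fun j _ => hKh0 j)
              (Finset.mem_univ i)) hL1
    _ = L * (∑ j, K |h j|) * ∑ i, |t i| := by
          rw [Finset.mul_sum]
          exact Finset.sum_congr rfl fun i _ => by ring

lemma SpanS_subset_ASet (hV : IsLebesgue V) (hW : IsLebesgue W) (hK : IsDaniell W K) :
    SpanS V W ⊆ ASet V W K := by
  rintro f ⟨m, g, h, φ, ψ, hφ, hψ, hg, hh, hf⟩
  constructor
  · intro x
    have e : (fun y => f (x, y)) = (fun y => φ (fun i => g i x * h i y))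
        - fun y => ψ (fun i => g i x * h i y) := by
      funext y; rw [hf x y]; rfl
    rw [e]
    exact hW.1.sub_mem_s13 (sec_mem hW hφ _ h hh) (sec_mem hW hψ _ h hh)
  · have e : (fun x => K (fun y => f (x, y)))
        = (fun x => (fun t : Fin m → ℝ => K (fun y => φ (fun i => t i * h i y)))
            (fun i => g i x))
          - fun x => (fun t : Fin m → ℝ => K (fun y => ψ (fun i => t i * h i y)))
            (fun i => g i x) := by
      funext x
      simp only [Pi.sub_apply]
      rw [← hK.sub (sec_mem hW hφ _ h hh) (sec_mem hW hψ _ h hh)]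
      congr 1
      funext y
      rw [hf x y]
      rfl
    rw [e]
    exact hV.1.sub_mem_s13
      (sublin_comp_mem hV (Ksec_sublin hW hK hφ h hh) g hg)
      (sublin_comp_mem hV (Ksec_sublin hW hK hψ h hh) g hg)

lemma ASet_pdom (hV : IsLebesgue V) (hW : IsLebesgue W) (hK : IsDaniell W K) :
    Pdom (ASet V W K) ⊆ ASet V W K := by
  rintro f ⟨F, hFA, hdom, hconv⟩
  have hsecW : ∀ n x, (fun y => F n (x, y)) ∈ W := fun n x => (hFA n).1 x
  have hsec : ∀ x, (fun y => f (x, y)) ∈ W ∧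
      Tendsto (fun n => K (fun y => F n (x, y))) atTop (𝓝 (K (fun y => f (x, y)))) := by
    intro x
    refine daniell_dct hW hK (fun n => fun y => F n (x, y)) _ (fun n => hsecW n x) ?_ ?_
    · intro n y
      have := hdom n (x, y)
      simpa using this
    · intro y
      exact hconv (x, y)
  refine ⟨fun x => (hsec x).1, ?_⟩
  apply hV.2
  refine ⟨fun n => fun x => K (fun y => F n (x, y)), fun n => (hFA n).2, ?_, ?_⟩
  · intro n x
    simp only [Pi.abs_apply]
    refine (hK.abs_le (hsecW (n + 1) x)).trans ?_
    have e : |fun y => F (n + 1) (x, y)| = fun y => |F (n + 1) (x, y)| := by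
      funext y; simp
    rw [e]
    refine hK.mono ?_ (hsecW 0 x) ?_
    · rw [← e]
      exact hW.1.2 _ (hsecW (n + 1) x)
    · intro y
      have := hdom n (x, y)
      simpa using this
  · intro x
    exact (hsec x).2

end SAProps
section Closure

variable {Z : Type*}

def PdomClosure (S : Set (Z → ℝ)) : Set (Z → ℝ) := ⋂₀ { C | S ⊆ C ∧ Pdom C ⊆ C }

lemma subset_pdomClosure_s13 {S : Set (Z → ℝ)} : S ⊆ PdomClosure S :=
  fun f hf => Set.mem_sInter.mpr fun _ hC => hC.1 hf

lemma pdomClosure_pdom {S : Set (Z → ℝ)} : Pdom (PdomClosure S) ⊆ PdomClosure S := by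
  rintro f ⟨F, hF, hdom, hconv⟩
  refine Set.mem_sInter.mpr fun C hC => ?_
  exact hC.2 ⟨F, fun n => Set.mem_sInter.mp (hF n) C hC, hdom, hconv⟩

lemma pdomClosure_min {S C : Set (Z → ℝ)} (h1 : S ⊆ C) (h2 : Pdom C ⊆ C) :
    PdomClosure S ⊆ C :=
  fun _ hf => Set.mem_sInter.mp hf C ⟨h1, h2⟩

/-- lattice-linear terms in two variables. -/
inductive LTerm where
  | varL : LTerm
  | varR : LTerm
  | add : LTerm → LTerm → LTerm
  | smul : ℝ → LTerm → LTerm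
  | abs : LTerm → LTerm

namespace LTerm

noncomputable def ev : LTerm → ℝ → ℝ → ℝ
  | varL, a, _ => a
  | varR, _, b => b
  | add t s, a, b => ev t a b + ev s a b
  | smul c t, a, b => c * ev t a b
  | abs t, a, b => |ev t a b|

noncomputable def lip : LTerm → ℝ
  | varL => 1
  | varR => 1
  | add t s => lip t + lip s
  | smul c t => |c| * lip t
  | abs t => lip t

lemma lip_nonneg : ∀ T : LTerm, 0 ≤ T.lip := by
  intro T
  induction T with
  | varL => exact zero_le_one
  | varR => exact zero_le_one
  | add t s iht ihs => exact add_nonneg iht ihs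
  | smul c t iht => exact mul_nonneg (abs_nonneg c) iht
  | abs t iht => exact iht

lemma ev_lip : ∀ (T : LTerm) (a b a' b' : ℝ),
    |ev T a b - ev T a' b'| ≤ lip T * (|a - a'| + |b - b'|) := by
  intro T
  induction T with
  | varL => intro a b a' b'; simp only [ev, lip, one_mul]
            exact le_add_of_nonneg_right (abs_nonneg _)
  | varR => intro a b a' b'; simp only [ev, lip, one_mul]
            exact le_add_of_nonneg_left (abs_nonneg _)
  | add t s iht ihs =>
    intro a b a' b'
    simp only [ev, lip]
    have h1 := iht a b a' b'
    have h2 := ihs a b a' b'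
    calc |ev t a b + ev s a b - (ev t a' b' + ev s a' b')|
        = |(ev t a b - ev t a' b') + (ev s a b - ev s a' b')| := by ring_nf
      _ ≤ |ev t a b - ev t a' b'| + |ev s a b - ev s a' b'| := abs_add_le _ _
      _ ≤ (lip t + lip s) * (|a - a'| + |b - b'|) := by nlinarith [abs_nonneg (a - a'), abs_nonneg (b - b')]
  | smul c t iht =>
    intro a b a' b'
    simp only [ev, lip]
    have h1 := iht a b a' b'
    calc |c * ev t a b - c * ev t a' b'| = |c| * |ev t a b - ev t a' b'| := by
          rw [← abs_mul]; ring_nf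
      _ ≤ |c| * (lip t * (|a - a'| + |b - b'|)) :=
          mul_le_mul_of_nonneg_left h1 (abs_nonneg c)
      _ = |c| * lip t * (|a - a'| + |b - b'|) := by ring
  | abs t iht =>
    intro a b a' b'
    simp only [ev, lip]
    exact (abs_abs_sub_abs_le_abs_sub _ _).trans (iht a b a' b')

lemma ev_zero : ∀ T : LTerm, ev T 0 0 = 0 := by
  intro T
  induction T with
  | varL => rfl
  | varR => rfl
  | add t s iht ihs => simp only [ev, iht, ihs, add_zero]
  | smul c t iht => simp only [ev, iht, mul_zero]
  | abs t iht => simp only [ev, iht, abs_zero]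

lemma ev_bound (T : LTerm) (a b : ℝ) : |ev T a b| ≤ lip T * (|a| + |b|) := by
  have := ev_lip T a b 0 0
  rw [ev_zero T] at this
  simpa using this

lemma ev_mem {R : Set (Z → ℝ)} (hR : IsRiesz R) {f g : Z → ℝ} (hf : f ∈ R) (hg : g ∈ R) :
    ∀ T : LTerm, (fun z => ev T (f z) (g z)) ∈ R := by
  intro T
  induction T with
  | varL => exact hf
  | varR => exact hg
  | add t s iht ihs =>
    have := hR.1.2.1 _ _ iht ihs
    convert this using 1
    rfl
  | smul c t iht =>
    have := hR.1.2.2 c _ iht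
    convert this using 1
    rfl
  | abs t iht =>
    have := hR.2 _ iht
    have e : |fun z => ev t (f z) (g z)| = fun z => ev (abs t) (f z) (g z) := by
      funext z; simp [ev]
    rwa [e] at this

lemma ev_tendsto {A B : ℕ → ℝ} {a b : ℝ} (hA : Tendsto A atTop (𝓝 a))
    (hB : Tendsto B atTop (𝓝 b)) (T : LTerm) :
    Tendsto (fun n => ev T (A n) (B n)) atTop (𝓝 (ev T a b)) := by
  have h1 : Tendsto (fun n => ev T (A n) (B n) - ev T a b) atTop (𝓝 0) := by
    apply squeeze_zero_norm (fun n => (ev_lip T (A n) (B n) a b))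
    have h2 : Tendsto (fun n => lip T * (|A n - a| + |B n - b|)) atTop
        (𝓝 (lip T * (|a - a| + |b - b|))) :=
      (((hA.sub (tendsto_const_nhds (x := a))).abs).add
        ((hB.sub (tendsto_const_nhds (x := b))).abs)).const_mul (lip T)
    simpa using h2
  have := h1.add (tendsto_const_nhds (α := ℕ) (x := ev T a b))
  simpa using this

end LTerm

/-- the two-variable domination term `lip T * |a| + lip T * |b|`. -/
noncomputable def domTerm (T : LTerm) : LTerm :=
  LTerm.add (LTerm.smul T.lip (LTerm.abs LTerm.varL)) (LTerm.smul T.lip (LTerm.abs LTerm.varR))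

lemma domTerm_ev (T : LTerm) (a b : ℝ) :
    LTerm.ev (domTerm T) a b = T.lip * |a| + T.lip * |b| := rfl

lemma pdomClosure_lebesgue {S : Set (Z → ℝ)} (hS : IsRiesz S) :
    IsLebesgue (PdomClosure S) := by
  set G := PdomClosure S with hG
  have hGpdom : Pdom G ⊆ G := pdomClosure_pdom
  have hSG : S ⊆ G := subset_pdomClosure_s13
  -- Step 1
  set C1 : Set (Z → ℝ) :=
    { f | f ∈ G ∧ ∀ g ∈ S, ∀ T : LTerm, (fun z => LTerm.ev T (f z) (g z)) ∈ G } with hC1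
  have hSC1 : S ⊆ C1 := fun f hf =>
    ⟨hSG hf, fun g hg T => hSG (LTerm.ev_mem hS hf hg T)⟩
  have hPC1 : Pdom C1 ⊆ C1 := by
    rintro f ⟨F, hF, hdom, hconv⟩
    have hF00 : ∀ z, 0 ≤ F 0 z := fun z => (abs_nonneg _).trans (hdom 0 z)
    refine ⟨hGpdom ⟨F, fun n => (hF n).1, hdom, hconv⟩, fun g hg T => ?_⟩
    apply hGpdom
    refine ⟨fun n => Nat.rec (fun z => LTerm.ev (domTerm T) (F 0 z) (g z))
      (fun n _ => fun z => LTerm.ev T (F (n + 1) z) (g z)) n, ?_, ?_, ?_⟩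
    · intro n
      cases n with
      | zero => exact (hF 0).2 g hg (domTerm T)
      | succ n => exact (hF (n + 1)).2 g hg T
    · intro n z
      simp only [Pi.abs_apply]
      show |LTerm.ev T (F (n + 1) z) (g z)| ≤ LTerm.ev (domTerm T) (F 0 z) (g z)
      rw [domTerm_ev]
      refine (LTerm.ev_bound T _ _).trans ?_
      have h1 : |F (n + 1) z| ≤ F 0 z := by
        have := hdom n z; simpa using this
      have h2 := T.lip_nonneg
      have h3 : T.lip * (|F (n + 1) z| + |g z|) ≤ T.lip * (F 0 z + |g z|) := by
        refine mul_le_mul_of_nonneg_left (by linarith) h2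
      rw [abs_of_nonneg (hF00 z)]
      linarith
    · intro z
      rw [← tendsto_add_atTop_iff_nat 1]
      exact LTerm.ev_tendsto ((tendsto_add_atTop_iff_nat 1).mpr (hconv z))
        tendsto_const_nhds T
  have hGC1 : G ⊆ C1 := pdomClosure_min hSC1 hPC1
  -- Step 2
  set C2 : Set (Z → ℝ) :=
    { g | g ∈ G ∧ ∀ f ∈ G, ∀ T : LTerm, (fun z => LTerm.ev T (f z) (g z)) ∈ G } with hC2
  have hSC2 : S ⊆ C2 := fun g hg =>
    ⟨hSG hg, fun f hf T => (hGC1 hf).2 g hg T⟩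
  have hPC2 : Pdom C2 ⊆ C2 := by
    rintro g ⟨B, hB, hdom, hconv⟩
    have hB00 : ∀ z, 0 ≤ B 0 z := fun z => (abs_nonneg _).trans (hdom 0 z)
    refine ⟨hGpdom ⟨B, fun n => (hB n).1, hdom, hconv⟩, fun f hf T => ?_⟩
    apply hGpdom
    refine ⟨fun n => Nat.rec (fun z => LTerm.ev (domTerm T) (f z) (B 0 z))
      (fun n _ => fun z => LTerm.ev T (f z) (B (n + 1) z)) n, ?_, ?_, ?_⟩
    · intro n
      cases n with
      | zero => exact (hB 0).2 f hf (domTerm T)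
      | succ n => exact (hB (n + 1)).2 f hf T
    · intro n z
      simp only [Pi.abs_apply]
      show |LTerm.ev T (f z) (B (n + 1) z)| ≤ LTerm.ev (domTerm T) (f z) (B 0 z)
      rw [domTerm_ev]
      refine (LTerm.ev_bound T _ _).trans ?_
      have h1 : |B (n + 1) z| ≤ B 0 z := by
        have := hdom n z; simpa using this
      have h2 := T.lip_nonneg
      have h3 : T.lip * (|f z| + |B (n + 1) z|) ≤ T.lip * (|f z| + B 0 z) := by
        refine mul_le_mul_of_nonneg_left (by linarith) h2
      rw [abs_of_nonneg (hB00 z)]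
      linarith
    · intro z
      rw [← tendsto_add_atTop_iff_nat 1]
      exact LTerm.ev_tendsto tendsto_const_nhds
        ((tendsto_add_atTop_iff_nat 1).mpr (hconv z)) T
  have hGC2 : G ⊆ C2 := pdomClosure_min hSC2 hPC2
  have hpair : ∀ f ∈ G, ∀ g ∈ G, ∀ T : LTerm, (fun z => LTerm.ev T (f z) (g z)) ∈ G :=
    fun f hf g hg T => (hGC2 hg).2 f hf T
  refine ⟨⟨⟨?_, ?_, ?_⟩, ?_⟩, hGpdom⟩
  · exact hSG hS.1.1
  · intro f g hf hg
    have := hpair f hf g hg (LTerm.add LTerm.varL LTerm.varR)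
    convert this using 1
    rfl
  · intro c f hf
    have := hpair f hf f hf (LTerm.smul c LTerm.varL)
    convert this using 1
    rfl
  · intro f hf
    have := hpair f hf f hf (LTerm.abs LTerm.varL)
    have e : |f| = fun z => LTerm.ev (LTerm.abs LTerm.varL) (f z) (f z) := by
      funext z; simp [LTerm.ev]
    rwa [e]

end Closure
lemma lgen_lebesgue {Z : Type*} (M : Set (Z → ℝ)) : IsLebesgue (LGen M) := by
  refine ⟨⟨⟨?_, ?_, ?_⟩, ?_⟩, ?_⟩
  · exact Set.mem_sInter.mpr fun L hL => hL.1.1.1.1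
  · intro f g hf hg
    exact Set.mem_sInter.mpr fun L hL =>
      hL.1.1.1.2.1 f g (Set.mem_sInter.mp hf L hL) (Set.mem_sInter.mp hg L hL)
  · intro c f hf
    exact Set.mem_sInter.mpr fun L hL => hL.1.1.1.2.2 c f (Set.mem_sInter.mp hf L hL)
  · intro f hf
    exact Set.mem_sInter.mpr fun L hL => hL.1.1.2 f (Set.mem_sInter.mp hf L hL)
  · rintro f ⟨F, hF, hdom, hconv⟩
    exact Set.mem_sInter.mpr fun L hL =>
      hL.1.2 ⟨F, fun n => Set.mem_sInter.mp (hF n) L hL, hdom, hconv⟩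

theorem stmt13 {X Y : Type*} (V : Set (X → ℝ)) (W : Set (Y → ℝ))
    (J : (X → ℝ) → ℝ) (K : (Y → ℝ) → ℝ)
    (hV : IsLebesgue V) (hW : IsLebesgue W)
    (hJ : IsDaniell V J) (hK : IsDaniell W K) :
    (∀ f ∈ LGen (TensorSet V W),
      (∀ x, (fun y => f (x, y)) ∈ W) ∧ (fun x => K (fun y => f (x, y))) ∈ V) ∧
    IsDaniell (LGen (TensorSet V W))
      (fun f => J (fun x => K (fun y => f (x, y)))) := by
  have hSA : SpanS V W ⊆ ASet V W K := SpanS_subset_ASet hV hW hK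
  have hApdom : Pdom (ASet V W K) ⊆ ASet V W K := ASet_pdom hV hW hK
  have hGleb : IsLebesgue (PdomClosure (SpanS V W)) := pdomClosure_lebesgue SpanS_riesz
  have hMS : TensorSet V W ⊆ SpanS V W := tensor_subset_SpanS
  have hLG : LGen (TensorSet V W) ⊆ PdomClosure (SpanS V W) := fun f hf =>
    Set.mem_sInter.mp hf _ ⟨hGleb, hMS.trans subset_pdomClosure_s13⟩
  have hGA : PdomClosure (SpanS V W) ⊆ ASet V W K := pdomClosure_min hSA hApdom
  have part1 : ∀ f ∈ LGen (TensorSet V W),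
      (∀ x, (fun y => f (x, y)) ∈ W) ∧ (fun x => K (fun y => f (x, y))) ∈ V :=
    fun f hf => hGA (hLG hf)
  have hLeb := lgen_lebesgue (TensorSet V W)
  refine ⟨part1, hLeb.1, ?_, ?_, ?_, ?_⟩
  · -- additivity
    intro f g hf hg
    have e : (fun x => K fun y => (f + g) (x, y))
        = (fun x => K fun y => f (x, y)) + fun x => K fun y => g (x, y) := by
      funext x
      simp only [Pi.add_apply]
      rw [← hK.2.1 _ _ ((part1 f hf).1 x) ((part1 g hg).1 x)]
      congr 1
    show J (fun x => K fun y => (f + g) (x, y)) = _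
    rw [e, hJ.2.1 _ _ (part1 f hf).2 (part1 g hg).2]
  · -- homogeneity
    intro c f hf
    have e : (fun x => K fun y => (c • f) (x, y)) = c • fun x => K fun y => f (x, y) := by
      funext x
      simp only [Pi.smul_apply, smul_eq_mul]
      rw [← hK.2.2.1 c _ ((part1 f hf).1 x)]
      congr 1
    show J (fun x => K fun y => (c • f) (x, y)) = _
    rw [e, hJ.2.2.1 c _ (part1 f hf).2]
  · -- I f ≤ I |f|
    intro f hf
    have hfa : |f| ∈ LGen (TensorSet V W) := hLeb.1.2 f hf
    refine hJ.mono (part1 f hf).2 (part1 |f| hfa).2 ?_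
    intro x
    have e : (fun y => |f| (x, y)) = |fun y => f (x, y)| := by
      funext y; simp
    dsimp only
    rw [e]
    exact hK.2.2.2.1 _ ((part1 f hf).1 x)
  · -- continuity
    intro F hF hpos hdec hconv
    set H : ℕ → X → ℝ := fun n => fun x => K fun y => F n (x, y) with hH
    have hHV : ∀ n, H n ∈ V := fun n => (part1 (F n) (hF n)).2
    have hHpos : ∀ n, 0 ≤ H (n + 1) := fun n x =>
      hK.nonneg ((part1 _ (hF (n + 1))).1 x) fun y => hpos n (x, y)
    have hHdec : ∀ n, H (n + 1) ≤ H n := fun n x =>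
      hK.mono ((part1 _ (hF (n + 1))).1 x) ((part1 _ (hF n)).1 x) fun y => hdec n (x, y)
    have hHzero : ∀ x, Tendsto (fun n => H n x) atTop (𝓝 0) := by
      intro x
      rw [← tendsto_add_atTop_iff_nat 1]
      have := hK.2.2.2.2 (fun k => fun y => F (k + 1) (x, y))
        (fun k => (part1 _ (hF (k + 1))).1 x)
        (fun k => fun y => hpos (k + 1) (x, y))
        (fun k => fun y => hdec (k + 1) (x, y))
        (fun y => (tendsto_add_atTop_iff_nat 1).mpr (hconv (x, y)))
      exact this
    exact hJ.2.2.2.2 H hHV hHpos hHdec hHzero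
end
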